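/- arXiv:2406.01120 — 11 statements merged into one kernel-verified Lean document; each statement's English description precedes it below -/
import Mathlib

section
/- Let A be a conilpotent Com-PreLie Hopf algebra with antipode S. Then for all a, b in A, S(a • b) = (S(a) • b⁽¹⁾) · S(b⁽²⁾), in Sweedler notation. -/
/-! For fixed `b`, the Leibniz rule makes `ψ x = (x • b⁽¹⁾) S b⁽²⁾` a derivation of `A`.
Applying `m ∘ (id ⊗ S)` to the compatibility relation and using `ε (x • b) = 0` gives
`id ⋆ (S ∘ (· • b)) + ψ ⋆ S = 0` in the convolution algebra on `A →ₗ A`, while differentiating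
`x⁽¹⁾ S x⁽²⁾ = ε x` by `ψ` gives `ψ ⋆ S + id ⋆ (ψ ∘ S) = 0`. Hence
`id ⋆ (S ∘ (· • b)) = id ⋆ (ψ ∘ S)`, and `id` is convolution-invertible with inverse `S`. -/

open TensorProduct Coalgebra

variable (K : Type*) [Field K] (A : Type*) [CommRing A] [Bialgebra K A]

/-- The reduced coproduct `Δ̃ a = Δ a - a ⊗ 1 - 1 ⊗ a`. -/
noncomputable def reducedComul : A →ₗ[K] A ⊗[K] A :=
  comul - (TensorProduct.mk K A A).flip 1 - TensorProduct.mk K A A 1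

/-- The filtration of `A` by the kernels of the iterated reduced coproducts:
`F 0 = 0` and `F (n+1) = Δ̃⁻¹ (F n ⊗ A)`, so that `F n = ker Δ̃⁽ⁿ⁾`. -/
noncomputable def redFilt : ℕ → Submodule K A
  | 0 => ⊥
  | n + 1 => Submodule.comap (reducedComul K A)
      (LinearMap.range (((redFilt n).subtype).rTensor A))

/-- `A` is conilpotent if every element of the augmentation ideal is killed by some
iterate of the reduced coproduct. -/
def IsConilpotent : Prop :=
  ∀ a : A, counit (R := K) a = 0 → ∃ n : ℕ, 1 ≤ n ∧ a ∈ redFilt K A n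

namespace Coalgebra.Repr
variable {R C ι : Type*} [CommSemiring R] [AddCommMonoid C] [Module R C] [Coalgebra R C] {a : C}

theorem sum_counit_mul (𝓡 : Repr R a ι) (g : C →ₗ[R] R) :
    ∑ i ∈ 𝓡.index, counit (𝓡.left i) * g (𝓡.right i) = g a := by
  simpa only [map_sum, LinearMap.mul'_apply, one_mul] using
    congr(LinearMap.mul' R R $(sum_counit_tmul_map_eq (repr := 𝓡) g a))

theorem sum_mul_counit (𝓡 : Repr R a ι) (g : C →ₗ[R] R) :
    ∑ i ∈ 𝓡.index, g (𝓡.left i) * counit (𝓡.right i) = g a := by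
  simpa only [map_sum, LinearMap.mul'_apply, mul_one] using
    congr(LinearMap.mul' R R $(sum_map_tmul_counit_eq (repr := 𝓡) g a))

end Coalgebra.Repr

open HopfAlgebra WithConv

section HopfAlgebra
variable {R H : Type*} [CommSemiring R]

theorem HopfAlgebra.isUnit_toConv_id [Semiring H] [HopfAlgebra R H] :
    IsUnit (toConv (LinearMap.id : H →ₗ[R] H)) :=
  ⟨⟨_, _, LinearMap.id_mul_antipode, LinearMap.antipode_mul_id⟩, rfl⟩

theorem Derivation.convMul_antipode_add_id_convMul_comp_antipode [CommSemiring H]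
    [HopfAlgebra R H] (D : Derivation R H H) :
    toConv (D : H →ₗ[R] H) * toConv (antipode R) +
      toConv LinearMap.id * toConv ((D : H →ₗ[R] H) ∘ₗ antipode R) = 0 := by
  ext x
  have h := congr(D $(sum_mul_antipode_eq_algebraMap_counit (ℛ R x)))
  simp only [map_sum, Derivation.leibniz, Derivation.map_algebraMap, smul_eq_mul] at h
  simp [(ℛ R x).convMul_apply, ← h, Finset.sum_add_distrib, mul_comm, add_comm]

end HopfAlgebra

section ComPreLie
variable {R H : Type*} [CommRing R]

theorem counit_bullet_eq_zero [Semiring H] [Bialgebra R H] (bullet : H →ₗ[R] H →ₗ[R] H)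
    (compat : ∀ a b : H, comul (R := R) (bullet a b) =
      map LinearMap.id (bullet.flip b) (comul a) +
        map (lift bullet) (LinearMap.mul' R H)
          (tensorTensorTensorComm R H H H H (comul a ⊗ₜ comul b)))
    (a b : H) : counit (R := R) (bullet a b) = 0 := by
  -- applying `ε ⊗ ε` to `compat`, each of the two terms on the right becomes `ε (a • b)`
  have h := congr(LinearMap.mul' R R (map counit counit $(compat a b)))
  rw [← (ℛ R a).eq, ← (ℛ R b).eq, ← (ℛ R (bullet a b)).eq] at h
  simp only [map_sum, map_add, map_tmul, tensorTensorTensorComm_tmul, sum_tmul, tmul_sum,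
    LinearMap.mul'_apply, lift.tmul, LinearMap.id_apply, LinearMap.flip_apply,
    Bialgebra.counit_mul, ← mul_assoc, ← Finset.sum_mul] at h
  have h₁ := (ℛ R a).sum_counit_mul (counit ∘ₗ bullet.flip b)
  have h₂ c := (ℛ R a).sum_mul_counit (counit ∘ₗ bullet.flip c)
  have h₃ := (ℛ R b).sum_mul_counit (counit ∘ₗ bullet a)
  simp only [LinearMap.comp_apply, LinearMap.flip_apply] at h₁ h₂ h₃
  simp only [(ℛ R _).sum_mul_counit counit, h₁, h₂, h₃] at h
  exact left_eq_add.mp h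

variable [CommSemiring H] [HopfAlgebra R H] (bullet : H →ₗ[R] H →ₗ[R] H)

noncomputable def bulletConvAntipode (b : H) : H →ₗ[R] H where
  toFun x := (toConv (bullet x) * toConv (antipode R) : WithConv (H →ₗ[R] H)) b
  map_add' x y := by simp only [map_add, toConv_add, add_mul]; rfl
  map_smul' r x := by simp only [map_smul, toConv_smul, smul_mul_assoc]; rfl

theorem bulletConvAntipode_apply (b x : H) :
    bulletConvAntipode bullet b x = LinearMap.mul' R H (map (bullet x) (antipode R) (comul b)) :=
  rfl

theorem bulletConvAntipode_leibniz
    (leibniz : ∀ a b c : H, bullet (a * b) c = bullet a c * b + a * bullet b c) (b x y : H) :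
    bulletConvAntipode bullet b (x * y) =
      x • bulletConvAntipode bullet b y + y • bulletConvAntipode bullet b x := by
  simp only [bulletConvAntipode_apply, ← (ℛ R b).eq, map_sum, map_tmul, LinearMap.mul'_apply,
    leibniz, smul_eq_mul, Finset.mul_sum, ← Finset.sum_add_distrib]
  exact Finset.sum_congr rfl fun _ _ ↦ by ring

theorem id_convMul_antipode_comp_bullet_add_bulletConvAntipode_convMul_antipode
    (compat : ∀ a b : H, comul (R := R) (bullet a b) =
      map LinearMap.id (bullet.flip b) (comul a) +
        map (lift bullet) (LinearMap.mul' R H)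
          (tensorTensorTensorComm R H H H H (comul a ⊗ₜ comul b)))
    (b : H) :
    toConv LinearMap.id * toConv (antipode R ∘ₗ bullet.flip b) +
      toConv (bulletConvAntipode bullet b) * toConv (antipode R) = 0 := by
  ext x
  have h := congr(LinearMap.mul' R H ((antipode R).lTensor H $(compat x b)))
  rw [mul_antipode_lTensor_comul_apply, counit_bullet_eq_zero bullet compat, map_zero] at h
  rw [← (ℛ R x).eq, ← (ℛ R b).eq] at h
  simp only [map_sum, map_add, map_tmul, tensorTensorTensorComm_tmul, sum_tmul, tmul_sum,
    LinearMap.lTensor_tmul, LinearMap.mul'_apply, lift.tmul, LinearMap.id_apply,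
    LinearMap.flip_apply, antipode_mul_distrib] at h
  simp only [LinearMap.add_apply, ofConv_add, (ℛ R x).convMul_apply, bulletConvAntipode_apply,
    ← (ℛ R b).eq, map_sum, map_tmul, LinearMap.mul'_apply, LinearMap.comp_apply,
    LinearMap.flip_apply, LinearMap.id_apply, Finset.sum_mul]
  rw [ofConv_zero, LinearMap.zero_apply, h, Finset.sum_comm (s := (ℛ R b).index)]
  congr 1
  exact Finset.sum_congr rfl fun _ _ ↦ Finset.sum_congr rfl fun _ _ ↦ by ring

end ComPreLie

theorem antipode_bullet_general
    (K : Type*) [Field K]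
    (A : Type*) [CommRing A] [HopfAlgebra K A]
    (bullet : A →ₗ[K] A →ₗ[K] A)
    (leibniz : ∀ a b c : A, bullet (a * b) c = bullet a c * b + a * bullet b c)
    (compat : ∀ a b : A, comul (R := K) (bullet a b)
      = TensorProduct.map LinearMap.id (bullet.flip b) (comul a)
        + (TensorProduct.map (TensorProduct.lift bullet) (LinearMap.mul' K A))
            (TensorProduct.tensorTensorTensorComm K A A A A (comul a ⊗ₜ[K] comul b)))
    (a b : A) :
    HopfAlgebra.antipode (R := K) (bullet a b)
      = LinearMap.mul' K A
          (TensorProduct.map (bullet (HopfAlgebra.antipode (R := K) a))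
            (HopfAlgebra.antipode (R := K)) (comul b)) := by
  set ψ := bulletConvAntipode bullet b
  have hψ := (Derivation.mk' ψ (bulletConvAntipode_leibniz bullet leibniz b)
    ).convMul_antipode_add_id_convMul_comp_antipode
  have hS :=
    id_convMul_antipode_comp_bullet_add_bulletConvAntipode_convMul_antipode bullet compat b
  have h : toConv (antipode K ∘ₗ bullet.flip b) = toConv (ψ ∘ₗ antipode K) :=
    isUnit_toConv_id.mul_left_cancel <|
      add_right_cancel <| hS.trans (hψ.symm.trans (add_comm _ _))
  exact congr(($h).ofConv a)

/-- In a conilpotent Com-PreLie Hopf algebra, `S (a • b) = (S a • b⁽¹⁾) ⬝ S b⁽²⁾`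
in Sweedler's notation. -/
theorem antipode_bullet
    (K : Type*) [Field K] [CharZero K]
    (A : Type*) [CommRing A] [HopfAlgebra K A]
    (bullet : A →ₗ[K] A →ₗ[K] A)
    (prelie : ∀ a b c : A, bullet (bullet a b) c - bullet a (bullet b c)
      = bullet (bullet a c) b - bullet a (bullet c b))
    (leibniz : ∀ a b c : A, bullet (a * b) c = bullet a c * b + a * bullet b c)
    (compat : ∀ a b : A, comul (R := K) (bullet a b)
      = TensorProduct.map LinearMap.id (bullet.flip b) (comul a)
        + (TensorProduct.map (TensorProduct.lift bullet) (LinearMap.mul' K A))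
            (TensorProduct.tensorTensorTensorComm K A A A A (comul a ⊗ₜ[K] comul b)))
    (conil : IsConilpotent K A)
    (a b : A) :
    HopfAlgebra.antipode (R := K) (bullet a b)
      = LinearMap.mul' K A
          (TensorProduct.map (bullet (HopfAlgebra.antipode (R := K) a))
            (HopfAlgebra.antipode (R := K)) (comul b)) :=
  antipode_bullet_general K A bullet leibniz compat a b
end

section
/- Let A be a conilpotent Com-PreLie Hopf algebra with antipode S. Then for every a in A, S(a • 1) = S(a) • 1. -/
/-!
The map `D = (· • 1)` is a derivation of the product (Leibniz rule) and a coderivation of the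
coproduct (the compatibility with `b = 1`, since `Δ 1 = 1 ⊗ 1`). Any such `D` commutes with the
antipode. In the convolution algebra of `End A` it satisfies `(f * g) ∘ D = (f ∘ D) * g + f * (g ∘ D)`
and `D ∘ (f * g) = (D ∘ f) * g + f * (D ∘ g)`, so `1 ∘ D = 0 = D ∘ 1` because `1 = 1 * 1`.
Applied to `S * id = 1 = id * S` this gives `(S ∘ D) * id = -(S * D)` and
`id * (D ∘ S) = -(D * S)`, hence `S ∘ D = -(S * D * S) = D ∘ S`.
-/

open TensorProduct Coalgebra

variable (K : Type*) [Field K] (A : Type*) [CommRing A] [Bialgebra K A]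

open WithConv

namespace LinearMap

variable {R C A : Type*} [CommSemiring R] [AddCommMonoid C] [Module R C] [Coalgebra R C]

def IsCoderivation (D : C →ₗ[R] C) : Prop :=
  comul ∘ₗ D = (D.rTensor C + D.lTensor C) ∘ₗ comul

section Semiring

variable [Semiring A] [Algebra R A]

lemma IsCoderivation.convMul_comp {D : C →ₗ[R] C} (hD : IsCoderivation D)
    (f g : WithConv (C →ₗ[R] A)) :
    toConv ((f * g).ofConv ∘ₗ D) = toConv (f.ofConv ∘ₗ D) * g + f * toConv (g.ofConv ∘ₗ D) := by
  ext x
  have hx := congr($hD x)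
  simp only [comp_apply, add_apply] at hx
  simp only [convMul_apply, comp_apply, ofConv_add, add_apply, hx, map_add, map_rTensor,
    map_lTensor]

lemma derivation_comp_convMul {D : A →ₗ[R] A} (hD : ∀ x y, D (x * y) = D x * y + x * D y)
    (f g : WithConv (C →ₗ[R] A)) :
    toConv (D ∘ₗ (f * g).ofConv) = toConv (D ∘ₗ f.ofConv) * g + f * toConv (D ∘ₗ g.ofConv) := by
  ext x
  simp [(ℛ R x).convMul_apply, hD, Finset.sum_add_distrib]

end Semiring

section Ring

variable [Ring A] [Algebra R A]

lemma IsCoderivation.convOne_comp {D : C →ₗ[R] C} (hD : IsCoderivation D) :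
    toConv ((1 : WithConv (C →ₗ[R] A)).ofConv ∘ₗ D) = 0 := by
  simpa using hD.convMul_comp (1 : WithConv (C →ₗ[R] A)) 1

lemma derivation_comp_convOne {D : A →ₗ[R] A} (hD : ∀ x y, D (x * y) = D x * y + x * D y) :
    toConv (D ∘ₗ (1 : WithConv (C →ₗ[R] A)).ofConv) = 0 := by
  simpa using derivation_comp_convMul hD (1 : WithConv (C →ₗ[R] A)) 1

end Ring

end LinearMap

open LinearMap in
theorem HopfAlgebra.antipode_comp_eq_comp_antipode
    {R A : Type*} [CommRing R] [Ring A] [HopfAlgebra R A] {D : A →ₗ[R] A}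
    (hder : ∀ x y, D (x * y) = D x * y + x * D y) (hcoder : IsCoderivation D) :
    antipode R ∘ₗ D = D ∘ₗ antipode R := by
  set S := toConv (antipode R (A := A))
  set I := toConv (LinearMap.id : A →ₗ[R] A)
  have hSD : toConv (antipode R ∘ₗ D) * I = -(S * toConv D) := by
    have := hcoder.convMul_comp S I
    rw [antipode_mul_id, hcoder.convOne_comp] at this
    exact eq_neg_of_add_eq_zero_left this.symm
  have hDS : I * toConv (D ∘ₗ antipode R) = -(toConv D * S) := by
    have := derivation_comp_convMul hder I S
    rw [id_mul_antipode, derivation_comp_convOne hder] at this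
    exact eq_neg_of_add_eq_zero_right this.symm
  apply toConv_injective
  calc toConv (antipode R ∘ₗ D) = toConv (antipode R ∘ₗ D) * (I * S) := by
        rw [id_mul_antipode, mul_one]
    _ = -(S * toConv D * S) := by rw [← mul_assoc, hSD, neg_mul]
    _ = S * I * toConv (D ∘ₗ antipode R) := by rw [mul_assoc S I, hDS, mul_neg, mul_assoc]
    _ = toConv (D ∘ₗ antipode R) := by rw [antipode_mul_id, one_mul]

lemma isCoderivation_flip_one {R A : Type*} [CommSemiring R] [Semiring A] [Bialgebra R A]
    (bullet : A →ₗ[R] A →ₗ[R] A)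
    (compat : ∀ a : A, comul (R := R) (bullet a 1)
      = TensorProduct.map LinearMap.id (bullet.flip 1) (comul a)
        + (TensorProduct.map (TensorProduct.lift bullet) (LinearMap.mul' R A))
            (TensorProduct.tensorTensorTensorComm R A A A A (comul a ⊗ₜ[R] comul 1))) :
    LinearMap.IsCoderivation (bullet.flip 1) := by
  have hright : ∀ z : A ⊗[R] A,
      (TensorProduct.map (TensorProduct.lift bullet) (LinearMap.mul' R A))
        (TensorProduct.tensorTensorTensorComm R A A A A (z ⊗ₜ[R] comul 1))
      = (bullet.flip 1).rTensor A z := by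
    intro z
    induction z using TensorProduct.induction_on with
    | zero => simp
    | tmul x y => simp [Bialgebra.comul_one, Algebra.TensorProduct.one_def]
    | add u v hu hv => simp only [TensorProduct.add_tmul, map_add, hu, hv]
  ext a
  simp only [LinearMap.comp_apply, LinearMap.add_apply, LinearMap.flip_apply, compat, hright]
  exact add_comm _ _

theorem antipode_bullet_one_general
    (K : Type*) [Field K]
    (A : Type*) [CommRing A] [HopfAlgebra K A]
    (bullet : A →ₗ[K] A →ₗ[K] A)
    (leibniz : ∀ a b c : A, bullet (a * b) c = bullet a c * b + a * bullet b c)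
    (compat : ∀ a b : A, comul (R := K) (bullet a b)
      = TensorProduct.map LinearMap.id (bullet.flip b) (comul a)
        + (TensorProduct.map (TensorProduct.lift bullet) (LinearMap.mul' K A))
            (TensorProduct.tensorTensorTensorComm K A A A A (comul a ⊗ₜ[K] comul b)))
    (a : A) :
    HopfAlgebra.antipode (R := K) (bullet a 1)
      = bullet (HopfAlgebra.antipode (R := K) a) 1 :=
  LinearMap.congr_fun (HopfAlgebra.antipode_comp_eq_comp_antipode
    (fun x y => leibniz x y 1) (isCoderivation_flip_one bullet fun x => compat x 1)) a

/-- In a conilpotent Com-PreLie Hopf algebra, `S (a • 1) = S a • 1`. -/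
theorem antipode_bullet_one
    (K : Type*) [Field K] [CharZero K]
    (A : Type*) [CommRing A] [HopfAlgebra K A]
    (bullet : A →ₗ[K] A →ₗ[K] A)
    (prelie : ∀ a b c : A, bullet (bullet a b) c - bullet a (bullet b c)
      = bullet (bullet a c) b - bullet a (bullet c b))
    (leibniz : ∀ a b c : A, bullet (a * b) c = bullet a c * b + a * bullet b c)
    (compat : ∀ a b : A, comul (R := K) (bullet a b)
      = TensorProduct.map LinearMap.id (bullet.flip b) (comul a)
        + (TensorProduct.map (TensorProduct.lift bullet) (LinearMap.mul' K A))
            (TensorProduct.tensorTensorTensorComm K A A A A (comul a ⊗ₜ[K] comul b)))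
    (conil : IsConilpotent K A)
    (a : A) :
    HopfAlgebra.antipode (R := K) (bullet a 1)
      = bullet (HopfAlgebra.antipode (R := K) a) 1 :=
  antipode_bullet_one_general K A bullet leibniz compat a
end

section
/- In a graded connected Hopf algebra H with a grading-compatible operator N(x) = x • 1 (grafting a single vertex) satisfying S(x•1) = (S(x)•1⁽¹⁾)S(1⁽²⁾)-style compatibility specialized as S∘N(x) = N∘S(x) - k·g·S(x) for x homogeneous of degree k and g a fixed primitive element, and defining the sequence of coefficients a_{i_1,...,i_n} by S(δ_n) = Σ_{i_1+2i_2+...+n i_n = n} a_{i_1,...,i_n} δ_1^{i_1}...δ_n^{i_n}, these coefficients satisfy: a_{0,...,0,1} = -1, and if i_n = 0, a_{i_1,...,i_n} = Σ_{j≥2, i_j≥1} (i_{j-1}+1) a_{i_1,...,i_{j-1}+1, i_j-1,...,i_{n-1}} - (n-1)[i_1≥1] a_{i_1-1,i_2,...,i_{n-1}}. -/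
/-!
Write `X^i` for the monomial with exponent vector `i`, and let `P n = ∑_{λ ⊢ n} a_λ X^λ`, so that
`S (δ n)` is the image of `P n` under `X k ↦ δ k`. Since `N` is a derivation with
`N (δ k) = δ (k + 1)`, it is the image of the derivation `D : X k ↦ X (k + 1)`, and the antipode
compatibility `S (δ (n + 1)) = N (S (δ n)) - n δ 1 S (δ n)` becomes
`P (n + 1) = D (P n) - n X 1 P n` once the monomials `δ^λ` are known to be linearly independent.
The recursion is the comparison of the coefficients of `X^i` on both sides; in particular the
coefficient of `X (n + 1)` is that of `X n`, and `a_{(1)} = -1` because `S (δ 1) = ε (δ 1) - δ 1`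
for the primitive element `δ 1`.
-/

open TensorProduct Coalgebra Finsupp MvPolynomial

theorem Finsupp.sum_toMultiset_add_single (r : ℕ →₀ ℕ) (j : ℕ) :
    (toMultiset (r + single j 1)).sum = (toMultiset r).sum + j := by
  simp [toMultiset_add, toMultiset_single]

theorem Finsupp.sum_toMultiset_tsub_single_add {r : ℕ →₀ ℕ} {j : ℕ} (h : single j 1 ≤ r) :
    (toMultiset (r - single j 1)).sum + j = (toMultiset r).sum := by
  rw [← sum_toMultiset_add_single, tsub_add_cancel_of_le h]

theorem Finsupp.sum_toMultiset_eq_sum_mul (i : ℕ →₀ ℕ) :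
    (toMultiset i).sum = ∑ k ∈ i.support, k * i k := by
  simp [sum_toMultiset, Finsupp.sum, mul_comm]

namespace Nat.Partition

variable {n : ℕ}

theorem toFinsupp_parts_apply_zero (p : n.Partition) : Multiset.toFinsupp p.parts 0 = 0 := by
  simpa [Multiset.toFinsupp_apply] using fun h => (p.parts_pos h).ne' rfl

theorem toFinsupp_parts_injective :
    Function.Injective fun p : n.Partition => Multiset.toFinsupp p.parts :=
  fun _ _ h => Nat.Partition.ext (Multiset.toFinsupp.injective h)

theorem toFinsupp_parts_ofSums_toMultiset {i : ℕ →₀ ℕ} (h0 : i 0 = 0)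
    (hn : (toMultiset i).sum = n) : Multiset.toFinsupp (ofSums n (toMultiset i) hn).parts = i := by
  ext k
  rcases eq_or_ne k 0 with rfl | hk
  · rw [Multiset.toFinsupp_apply, count_ofSums_zero, h0]
  · rw [Multiset.toFinsupp_apply, count_ofSums_of_ne_zero hn hk, count_toMultiset]

end Nat.Partition

theorem Finsupp.eq_single_one_of_sum_toMultiset_eq_one {i : ℕ →₀ ℕ} (h0 : i 0 = 0)
    (h : (toMultiset i).sum = 1) : i = single 1 1 := by
  rw [← Nat.Partition.toFinsupp_parts_ofSums_toMultiset h0 h, Nat.Partition.partition_one_parts,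
    Multiset.toFinsupp_singleton]

namespace MvPolynomial

variable {R σ : Type*} [CommSemiring R]

theorem mkDerivation_eq_sum_pderiv_mul (f : σ → MvPolynomial σ R) (p : MvPolynomial σ R) :
    mkDerivation R f p = ∑ i ∈ p.vars, pderiv i p * f i := by
  classical
  let D : Derivation R (MvPolynomial σ R) (MvPolynomial σ R) := ∑ i ∈ p.vars, f i • pderiv i
  have hD (q : MvPolynomial σ R) : D q = ∑ i ∈ p.vars, pderiv i q * f i := by
    rw [← Derivation.coeFnAddMonoidHom_apply, map_sum, Finset.sum_apply]
    simp [Derivation.coeFnAddMonoidHom_apply, mul_comm]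
  rw [← hD]
  refine derivation_eq_of_forall_mem_vars fun i hi => ?_
  simp [hD, pderiv_X, Pi.single_apply, hi]

theorem _root_.Derivation.map_aeval_eq_aeval_mkDerivation {A : Type*} [CommSemiring A]
    [Algebra R A] (D : Derivation R A A) (x : σ → A) (f : σ → MvPolynomial σ R)
    (h : ∀ i, D (x i) = aeval x (f i)) (p : MvPolynomial σ R) :
    D (aeval x p) = aeval x (mkDerivation R f p) := by
  induction p using MvPolynomial.induction_on with
  | C c => simp [← algebraMap_eq]
  | add p q hp hq => simp [hp, hq]
  | mul_X p i hp => simp [hp, h]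

theorem coeff_eq_zero_of_aeval_eq_zero {R A : Type*} [CommRing R] [CommRing A] [Algebra R A]
    {x : σ → A} {s : Set (σ →₀ ℕ)}
    (hli : LinearIndepOn R (fun m => aeval x (monomial m (1 : R))) s)
    (hzero : ∀ m ∉ s, aeval x (monomial m (1 : R)) = 0)
    {p : MvPolynomial σ R} (hp : aeval x p = 0) (m : σ →₀ ℕ) (hm : m ∈ s) : coeff m p = 0 := by
  classical
  have hsum : ∑ n ∈ p.support.filter (· ∈ s), coeff n p • aeval x (monomial n (1 : R)) = 0 := by
    rw [Finset.sum_filter_of_ne fun n _ h => by_contra fun hn => h (by simp [hzero n hn]),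
      ← hp, p.as_sum, map_sum]
    simp [aeval_monomial, Algebra.smul_def]
  by_cases hmp : m ∈ p.support
  · exact linearIndepOn_iff'.mp hli _ _ (fun n hn => (Finset.mem_filter.mp hn).2) hsum m
      (Finset.mem_filter.mpr ⟨hmp, hm⟩)
  · exact notMem_support_iff.mp hmp

/-- The polynomial model of the growth operator, `X k` standing for `δ k`; `X 0` stands for
nothing and is sent to `0`. -/
noncomputable def succDerivation (R : Type*) [CommSemiring R] :
    Derivation R (MvPolynomial ℕ R) (MvPolynomial ℕ R) :=
  mkDerivation R fun k => if k = 0 then 0 else X (k + 1)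

theorem coeff_succDerivation (p : MvPolynomial ℕ R) (q : ℕ →₀ ℕ) :
    coeff q (succDerivation R p) = ∑ j ∈ q.support.filter (2 ≤ ·),
      ((q (j - 1) : R) + 1) * coeff (q + single (j - 1) 1 - single j 1) p := by
  set g := fun k => coeff q (pderiv k p * if k = 0 then 0 else X (k + 1))
  have hg : ∀ j ∈ q.support.filter (2 ≤ ·),
      g (j - 1) = ((q (j - 1) : R) + 1) * coeff (q + single (j - 1) 1 - single j 1) p := by
    intro j hj
    obtain ⟨hjq, hj2⟩ := Finset.mem_filter.mp hj
    have hshift : q - single j 1 + single (j - 1) 1 = q + single (j - 1) 1 - single j 1 := by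
      ext k
      have := Finsupp.mem_support_iff.mp hjq
      simp only [Finsupp.add_apply, Finsupp.tsub_apply, single_apply]
      split_ifs <;> omega
    simp only [g]
    rw [if_neg (by omega : j - 1 ≠ 0), Nat.sub_add_cancel (by omega : 1 ≤ j), coeff_mul_X',
      if_pos hjq, coeff_pderiv, hshift, tsub_apply, single_apply, if_neg (by omega : j ≠ j - 1),
      tsub_zero, mul_comm]
  have hvars : Function.support g ⊆ p.vars := fun k hk => by
    by_contra hkp
    exact hk (by simp [g, pderiv_eq_zero_of_notMem_vars hkp])
  have hq : Function.support g ⊆ (q.support.filter (2 ≤ ·)).image (· - 1) := fun k hk => by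
    have hk0 : k ≠ 0 := by rintro rfl; exact hk (by simp [g])
    have hkq : k + 1 ∈ q.support := by
      by_contra hkq
      exact hk (by simp only [g, if_neg hk0, coeff_mul_X', if_neg hkq])
    exact Finset.mem_image.mpr ⟨k + 1, Finset.mem_filter.mpr ⟨hkq, by omega⟩, rfl⟩
  calc coeff q (succDerivation R p)
      = ∑ k ∈ p.vars, g k := by rw [succDerivation, mkDerivation_eq_sum_pderiv_mul, coeff_sum]
    _ = ∑ k ∈ (q.support.filter (2 ≤ ·)).image (· - 1), g k := by
      rw [← finsum_eq_sum_of_support_subset g hvars, finsum_eq_sum_of_support_subset g hq]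
    _ = ∑ j ∈ q.support.filter (2 ≤ ·), g (j - 1) :=
      Finset.sum_image fun j hj j' hj' h => by
        have := (Finset.mem_filter.mp hj).2
        have := (Finset.mem_filter.mp hj').2
        omega
    _ = _ := Finset.sum_congr rfl hg

end MvPolynomial

section PartitionPoly

variable {R : Type*} [CommRing R] (a : (ℕ →₀ ℕ) → R)

noncomputable def partitionPoly (n : ℕ) : MvPolynomial ℕ R :=
  ∑ p : n.Partition, monomial (Multiset.toFinsupp p.parts) (a (Multiset.toFinsupp p.parts))

variable {a}

theorem coeff_partitionPoly {n : ℕ} {i : ℕ →₀ ℕ} (h0 : i 0 = 0) (hn : (toMultiset i).sum = n) :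
    coeff i (partitionPoly a n) = a i := by
  have hi := Nat.Partition.toFinsupp_parts_ofSums_toMultiset h0 hn
  rw [partitionPoly, coeff_sum, Finset.sum_eq_single (Nat.Partition.ofSums n _ hn)]
  · rw [coeff_monomial, hi, if_pos rfl]
  · intro p _ hp
    rw [coeff_monomial,
      if_neg fun h => hp (Nat.Partition.toFinsupp_parts_injective (h.trans hi.symm))]
  · simp

theorem eq_sub_of_coeff_partitionPoly_succ {n : ℕ} {q : ℕ →₀ ℕ} (h0 : q 0 = 0)
    (hq : (toMultiset q).sum = n + 1)
    (h : coeff q (partitionPoly a (n + 1))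
      = coeff q (succDerivation R (partitionPoly a n) - (n : R) • (X 1 * partitionPoly a n))) :
    a q = (∑ j ∈ q.support.filter (2 ≤ ·),
        ((q (j - 1) : R) + 1) * a (q + single (j - 1) 1 - single j 1))
      - n * (if 1 ≤ q 1 then a (q - single 1 1) else 0) := by
  rw [coeff_partitionPoly h0 hq, coeff_sub, coeff_smul, coeff_succDerivation, coeff_X_mul'] at h
  rw [h, smul_eq_mul]
  congr 1
  · refine Finset.sum_congr rfl fun j hj => ?_
    obtain ⟨hjq, hj2⟩ := Finset.mem_filter.mp hj
    have hsum := sum_toMultiset_tsub_single_add (r := q + single (j - 1) 1)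
      (single_le_iff.mpr (le_add_right (Nat.one_le_iff_ne_zero.mpr (mem_support_iff.mp hjq))))
    rw [sum_toMultiset_add_single, hq] at hsum
    rw [coeff_partitionPoly (by simp [h0, show j - 1 ≠ 0 by omega, show j ≠ 0 by omega])
      (by omega)]
  · have hmem : 1 ∈ q.support ↔ 1 ≤ q 1 := by simp [Nat.one_le_iff_ne_zero]
    congr 1
    simp only [hmem]
    split_ifs with h1
    · have hsum := sum_toMultiset_tsub_single_add (single_le_iff.mpr h1)
      rw [hq] at hsum
      rw [coeff_partitionPoly (by simp [h0]) (by omega)]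
    · rfl

theorem apply_single_eq_neg_one_of_partitionPoly_succ (h1 : a (single 1 1) = -1)
    (h : ∀ n, 1 ≤ n → ∀ q : ℕ →₀ ℕ, q 0 = 0 → coeff q (partitionPoly a (n + 1))
      = coeff q (succDerivation R (partitionPoly a n) - (n : R) • (X 1 * partitionPoly a n)))
    (n : ℕ) (hn : 1 ≤ n) : a (single n 1) = -1 := by
  induction n, hn using Nat.le_induction with
  | base => exact h1
  | succ n hn ih =>
    rw [eq_sub_of_coeff_partitionPoly_succ (by simp) (by simp) (h n hn _ (by simp))]
    have hn0 : n ≠ 0 := by omega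
    simp [Finset.filter_singleton, single_apply, hn, hn0, ih]

end PartitionPoly

theorem HopfAlgebra.antipode_eq_smul_one_sub_of_comul_eq {R A : Type*} [CommSemiring R] [Ring A]
    [HopfAlgebra R A] {g : A} (hg : comul (R := R) g = g ⊗ₜ[R] 1 + 1 ⊗ₜ[R] g) :
    antipode R g = counit (R := R) g • (1 : A) - g := by
  have h := mul_antipode_rTensor_comul_apply (R := R) g
  rw [hg] at h
  simp only [map_add, LinearMap.rTensor_tmul, LinearMap.mul'_apply, mul_one, antipode_one,
    one_mul] at h
  rw [Algebra.smul_def, mul_one, ← h, add_sub_cancel_right]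

/-! Evaluating at `Function.update δ 0 0` rather than at `δ` kills every monomial involving `X 0`,
so that the surviving exponent vectors are exactly the multiplicity vectors of partitions. -/

section Evaluation

variable {K H : Type*} [CommRing K] [CommRing H] [Algebra K H]

theorem aeval_update_zero_monomial (δ : ℕ → H) {m : ℕ →₀ ℕ} (hm : m 0 = 0) (c : K) :
    aeval (Function.update δ 0 0) (monomial m c) = c • m.prod fun k e => δ k ^ e := by
  rw [aeval_monomial, ← Algebra.smul_def]
  congr 1
  refine Finsupp.prod_congr fun k hk => ?_
  rw [Function.update_of_ne (by rintro rfl; exact mem_support_iff.mp hk hm)]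

theorem aeval_update_zero_monomial_of_ne (δ : ℕ → H) {m : ℕ →₀ ℕ} (hm : m 0 ≠ 0) (c : K) :
    aeval (Function.update δ 0 0) (monomial m c) = 0 := by
  rw [aeval_monomial, Finsupp.prod, Finset.prod_eq_zero (mem_support_iff.mpr hm) (by simp [hm]),
    mul_zero]

theorem linearIndepOn_aeval_update_zero_monomial (δ : ℕ → H)
    (hind : LinearIndependent K fun q : Σ n : ℕ, n.Partition =>
      (Multiset.toFinsupp q.2.parts).prod fun k m => δ k ^ m) :
    LinearIndepOn K (fun m => aeval (Function.update δ 0 0) (monomial m (1 : K)))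
      {m | m 0 = 0} := by
  let e : {m : ℕ →₀ ℕ | m 0 = 0} → Σ n : ℕ, n.Partition :=
    fun m => ⟨_, Nat.Partition.ofSums _ (toMultiset m.1) rfl⟩
  have he (m : {m : ℕ →₀ ℕ | m 0 = 0}) : Multiset.toFinsupp (e m).2.parts = m :=
    Nat.Partition.toFinsupp_parts_ofSums_toMultiset m.2 rfl
  have hinj : Function.Injective e := fun m m' h =>
    Subtype.ext <| by rw [← he m, ← he m', h]
  have hv : (fun m : {m : ℕ →₀ ℕ | m 0 = 0} =>
        aeval (Function.update δ 0 0) (monomial m.1 (1 : K)))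
      = (fun q : Σ n : ℕ, n.Partition =>
        (Multiset.toFinsupp q.2.parts).prod fun k m => δ k ^ m) ∘ e :=
    funext fun m => by rw [Function.comp_apply, he, aeval_update_zero_monomial δ m.2, one_smul]
  rw [LinearIndepOn, hv]
  exact hind.comp e hinj

theorem coeff_eq_of_aeval_update_zero_eq (δ : ℕ → H)
    (hind : LinearIndependent K fun q : Σ n : ℕ, n.Partition =>
      (Multiset.toFinsupp q.2.parts).prod fun k m => δ k ^ m)
    {p q : MvPolynomial ℕ K}
    (h : aeval (Function.update δ 0 0) p = aeval (Function.update δ 0 0) q)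
    (m : ℕ →₀ ℕ) (hm : m 0 = 0) : coeff m p = coeff m q := by
  rw [← sub_eq_zero, ← coeff_sub]
  exact coeff_eq_zero_of_aeval_eq_zero (linearIndepOn_aeval_update_zero_monomial δ hind)
    (fun m hm => aeval_update_zero_monomial_of_ne δ hm 1) (by rw [map_sub, h, sub_self]) m hm

theorem aeval_update_zero_partitionPoly (δ : ℕ → H) (a : (ℕ →₀ ℕ) → K) (n : ℕ) :
    aeval (Function.update δ 0 0) (partitionPoly a n)
      = ∑ p : n.Partition, a (Multiset.toFinsupp p.parts)
          • (Multiset.toFinsupp p.parts).prod fun k m => δ k ^ m := by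
  simp only [partitionPoly, map_sum,
    aeval_update_zero_monomial δ (Nat.Partition.toFinsupp_parts_apply_zero _)]

theorem Derivation.map_aeval_update_zero (D : Derivation K H H) (δ : ℕ → H)
    (hδ : ∀ n, 1 ≤ n → δ (n + 1) = D (δ n)) (p : MvPolynomial ℕ K) :
    D (aeval (Function.update δ 0 0) p) = aeval (Function.update δ 0 0) (succDerivation K p) := by
  refine D.map_aeval_eq_aeval_mkDerivation _ _ (fun k => ?_) p
  rcases eq_or_ne k 0 with rfl | hk
  · simp
  · simp [hk, hδ k (Nat.one_le_iff_ne_zero.mpr hk)]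

end Evaluation

theorem apply_single_one_eq_neg_one_of_antipode {K H : Type*} [CommRing K] [CommRing H]
    [HopfAlgebra K H] {δ : ℕ → H}
    (hind : LinearIndependent K fun q : Σ n : ℕ, n.Partition =>
      (Multiset.toFinsupp q.2.parts).prod fun k m => δ k ^ m)
    {a : (ℕ →₀ ℕ) → K}
    (hS : HopfAlgebra.antipode K (δ 1) = aeval (Function.update δ 0 0) (partitionPoly a 1))
    (hprim : comul (R := K) (δ 1) = δ 1 ⊗ₜ[K] 1 + 1 ⊗ₜ[K] δ 1) :
    a (single 1 1) = -1 := by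
  have h := coeff_eq_of_aeval_update_zero_eq δ hind (q := C (counit (R := K) (δ 1)) - X 1)
    (by
      rw [← hS, HopfAlgebra.antipode_eq_smul_one_sub_of_comul_eq hprim]
      simp [Algebra.smul_def])
    (single 1 1) (by simp)
  rw [coeff_partitionPoly (by simp) (by simp)] at h
  have h0 : (0 : ℕ →₀ ℕ) ≠ single 1 1 := (single_ne_zero.mpr one_ne_zero).symm
  simpa [coeff_X, coeff_C, h0] using h

theorem connesMoscovici_antipode_coeff_recursion_general
    (K : Type*) [Field K]
    (H : Type*) [CommRing H] [HopfAlgebra K H]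
    (𝒜 : ℕ → Submodule K H)
    (bullet : H →ₗ[K] H →ₗ[K] H)
    (leibniz : ∀ a b c : H, bullet (a * b) c = bullet a c * b + a * bullet b c)
    (N : H →ₗ[K] H) (g : H)
    (hgprim : comul (R := K) g = g ⊗ₜ[K] 1 + 1 ⊗ₜ[K] g)
    (hN : ∀ x : H, N x = bullet x g)
    (δ : ℕ → H) (hδ1 : δ 1 = g)
    (hδsucc : ∀ n : ℕ, 1 ≤ n → δ (n + 1) = N (δ n))
    (hδdeg : ∀ n : ℕ, 1 ≤ n → δ n ∈ 𝒜 n)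
    (hSN : ∀ (k : ℕ) (x : H), x ∈ 𝒜 k →
      HopfAlgebra.antipode (R := K) (N x)
        = N (HopfAlgebra.antipode (R := K) x)
          - (k : K) • (g * HopfAlgebra.antipode (R := K) x))
    (a : (ℕ →₀ ℕ) → K)
    (ha : ∀ n : ℕ, 1 ≤ n → HopfAlgebra.antipode (R := K) (δ n)
      = ∑ p : n.Partition, a (Multiset.toFinsupp p.parts)
          • (Multiset.toFinsupp p.parts).prod fun k m => δ k ^ m)
    (hind : LinearIndependent K
      fun q : Σ n : ℕ, n.Partition =>
        (Multiset.toFinsupp q.2.parts).prod fun k m => δ k ^ m) :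
    (∀ n : ℕ, 1 ≤ n → a (Finsupp.single n 1) = -1) ∧
    (∀ n : ℕ, 1 ≤ n → ∀ i : ℕ →₀ ℕ, i 0 = 0 →
      (∑ k ∈ i.support, k * i k) = n → i n = 0 →
      a i = (∑ j ∈ i.support.filter fun j => 2 ≤ j,
              ((i (j - 1) : K) + 1) * a (i + Finsupp.single (j - 1) 1 - Finsupp.single j 1))
        - ((n : K) - 1) * (if 1 ≤ i 1 then a (i - Finsupp.single 1 1) else 0)) := by
  set x := Function.update δ 0 0
  have hS (n : ℕ) (hn : 1 ≤ n) : HopfAlgebra.antipode K (δ n) = aeval x (partitionPoly a n) := by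
    rw [ha n hn, aeval_update_zero_partitionPoly]
  let D : Derivation K H H := Derivation.mk' N fun y z => by
    rw [hN, hN, hN, leibniz, smul_eq_mul, smul_eq_mul, add_comm, mul_comm z]
  have hrec (n : ℕ) (hn : 1 ≤ n) (q : ℕ →₀ ℕ) (hq : q 0 = 0) : coeff q (partitionPoly a (n + 1))
      = coeff q (succDerivation K (partitionPoly a n) - (n : K) • (X 1 * partitionPoly a n)) := by
    refine coeff_eq_of_aeval_update_zero_eq δ hind ?_ q hq
    rw [← hS (n + 1) (by omega), hδsucc n hn, hSN n _ (hδdeg n hn), hS n hn, map_sub, map_smul,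
      map_mul, ← D.map_aeval_update_zero δ hδsucc]
    simp [x, D, hδ1]
  have h1 := apply_single_one_eq_neg_one_of_antipode hind (hS 1 le_rfl) (hδ1 ▸ hgprim)
  refine ⟨apply_single_eq_neg_one_of_partitionPoly_succ h1 hrec, fun n hn i h0 hi hin => ?_⟩
  rw [← sum_toMultiset_eq_sum_mul] at hi
  obtain ⟨m, rfl⟩ : ∃ m, n = m + 1 := ⟨n - 1, by omega⟩
  have hm : 1 ≤ m := Nat.one_le_iff_ne_zero.mpr fun hm => by
    subst hm
    simp [eq_single_one_of_sum_toMultiset_eq_one h0 hi] at hin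
  rw [eq_sub_of_coeff_partitionPoly_succ h0 hi (hrec m hm i h0)]
  push_cast
  ring

/-- In a graded connected commutative Hopf algebra `H` with a Com-PreLie product `•`, the
growth operator `N x = x • g` (grafting a single vertex `g = δ 1`) satisfying the antipode
compatibility `S (N x) = N (S x) - k • (g * S x)` on homogeneous elements of degree `k`,
the coefficients of the expansion of `S (δ n)` on the monomials in the `δ_k` (indexed by
partitions of `n`) satisfy `a_{0,…,0,1} = -1` and, when `i_n = 0`,
`a_{i_1,…,i_n} = Σ_{j ≥ 2, i_j ≥ 1} (i_{j-1}+1) a_{i_1,…,i_{j-1}+1,i_j-1,…,i_{n-1}}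
  - (n-1)[i_1 ≥ 1] a_{i_1-1,i_2,…,i_{n-1}}`. -/
theorem connesMoscovici_antipode_coeff_recursion
    (K : Type*) [Field K] [CharZero K]
    (H : Type*) [CommRing H] [HopfAlgebra K H]
    (𝒜 : ℕ → Submodule K H) [GradedAlgebra 𝒜]
    (hconn : 𝒜 0 = Submodule.span K {1})
    (bullet : H →ₗ[K] H →ₗ[K] H)
    (leibniz : ∀ a b c : H, bullet (a * b) c = bullet a c * b + a * bullet b c)
    (N : H →ₗ[K] H) (g : H)
    (hgprim : comul (R := K) g = g ⊗ₜ[K] 1 + 1 ⊗ₜ[K] g)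
    (hN : ∀ x : H, N x = bullet x g)
    (δ : ℕ → H) (hδ1 : δ 1 = g)
    (hδsucc : ∀ n : ℕ, 1 ≤ n → δ (n + 1) = N (δ n))
    (hδdeg : ∀ n : ℕ, 1 ≤ n → δ n ∈ 𝒜 n)
    (hSN : ∀ (k : ℕ) (x : H), x ∈ 𝒜 k →
      HopfAlgebra.antipode (R := K) (N x)
        = N (HopfAlgebra.antipode (R := K) x)
          - (k : K) • (g * HopfAlgebra.antipode (R := K) x))
    (a : (ℕ →₀ ℕ) → K)
    (ha : ∀ n : ℕ, 1 ≤ n → HopfAlgebra.antipode (R := K) (δ n)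
      = ∑ p : n.Partition, a (Multiset.toFinsupp p.parts)
          • (Multiset.toFinsupp p.parts).prod fun k m => δ k ^ m)
    (hind : LinearIndependent K
      fun q : Σ n : ℕ, n.Partition =>
        (Multiset.toFinsupp q.2.parts).prod fun k m => δ k ^ m) :
    (∀ n : ℕ, 1 ≤ n → a (Finsupp.single n 1) = -1) ∧
    (∀ n : ℕ, 1 ≤ n → ∀ i : ℕ →₀ ℕ, i 0 = 0 →
      (∑ k ∈ i.support, k * i k) = n → i n = 0 →
      a i = (∑ j ∈ i.support.filter fun j => 2 ≤ j,
              ((i (j - 1) : K) + 1) * a (i + Finsupp.single (j - 1) 1 - Finsupp.single j 1))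
        - ((n : K) - 1) * (if 1 ≤ i 1 then a (i - Finsupp.single 1 1) else 0)) :=
  connesMoscovici_antipode_coeff_recursion_general K H 𝒜 bullet leibniz N g hgprim hN δ hδ1 hδsucc
    hδdeg hSN a ha hind
end

section
/- Define integer coefficients a by a_{0,...,0,1} = -1 (the 1 in position n) and, when i_n = 0, a_{i_1,...,i_n} = Σ_{j≥2, i_j≥1} (i_{j-1}+1) a_{i_1,...,i_{j-1}+1, i_j-1,...,i_{n-1}} - (n-1)[i_1≥1] a_{i_1-1,...,i_{n-1}}. Then for all n ≥ 1, a_{n,0,...,0} = (-1)^n (n-1)!. -/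
open Finsupp

def CoeffRecursion (a : (ℕ →₀ ℕ) → ℤ) : Prop :=
  ∀ n : ℕ, 1 ≤ n → ∀ i : ℕ →₀ ℕ, i 0 = 0 →
    (∑ k ∈ i.support, k * i k) = n → i n = 0 →
    a i = (∑ j ∈ i.support.filter fun j => 2 ≤ j,
            ((i (j - 1) : ℤ) + 1) * a (i + single (j - 1) 1 - single j 1))
      - ((n : ℤ) - 1) * (if 1 ≤ i 1 then a (i - single 1 1) else 0)

theorem Int.eq_neg_one_pow_mul_factorial {f : ℕ → ℤ} (h₁ : f 1 = -1)
    (hsucc : ∀ n, 1 ≤ n → f (n + 1) = -n * f n) {n : ℕ} (hn : 1 ≤ n) :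
    f n = (-1) ^ n * (n - 1).factorial := by
  induction n, hn using Nat.le_induction with
  | base => simpa using h₁
  | succ n hn ih =>
    obtain ⟨k, rfl⟩ := Nat.exists_eq_add_of_le' hn
    rw [hsucc _ hn, ih]
    simp only [Nat.add_sub_cancel, Nat.factorial_succ]
    push_cast
    ring

theorem Finsupp.sum_support_mul_single (k m : ℕ) :
    ∑ j ∈ (single k m).support, j * single k m j = k * m :=
  sum_single_index (mul_zero k)

/-- At `(n + 1, 0, 0, …)` the sum over `j ≥ 2` is empty and only the `i_1` term survives. -/
theorem coeff_single_one_succ {a : (ℕ →₀ ℕ) → ℤ} (hrec : CoeffRecursion a) {n : ℕ}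
    (hn : 1 ≤ n) : a (single 1 (n + 1)) = -n * a (single 1 n) := by
  have hsupp : (single 1 (n + 1)).support = {1} := support_single _ n.succ_ne_zero
  have hsub : single 1 (n + 1) - single 1 1 = single 1 n := by
    rw [← single_tsub, Nat.add_sub_cancel]
  rw [hrec (n + 1) (by omega) _ (by simp) ((sum_support_mul_single 1 (n + 1)).trans (one_mul _))
    (single_eq_of_ne (by omega)), hsupp, Finset.filter_singleton, if_neg (by omega),
    if_pos (by simp), hsub]
  simp

/-- Let `a` be the integer coefficients defined on multi-indices `(i_1,…,i_n)` with
`1·i_1 + … + n·i_n = n` (encoded as finitely supported functions `ℕ →₀ ℕ` vanishing at `0`)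
by `a_{0,…,0,1} = -1` and, when `i_n = 0`,
`a_{i_1,…,i_n} = Σ_{j ≥ 2, i_j ≥ 1} (i_{j-1}+1) a_{i_1,…,i_{j-1}+1,i_j-1,…,i_{n-1}}
  - (n-1)[i_1 ≥ 1] a_{i_1-1,…,i_{n-1}}`.
Then for all `n ≥ 1`, `a_{n,0,…,0} = (-1)^n (n-1)!`. -/
theorem coeff_a_pure_first
    (a : (ℕ →₀ ℕ) → ℤ)
    (hbase : ∀ n : ℕ, 1 ≤ n → a (Finsupp.single n 1) = -1)
    (hrec : ∀ n : ℕ, 1 ≤ n → ∀ i : ℕ →₀ ℕ, i 0 = 0 →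
      (∑ k ∈ i.support, k * i k) = n → i n = 0 →
      a i = (∑ j ∈ i.support.filter fun j => 2 ≤ j,
              ((i (j - 1) : ℤ) + 1) * a (i + Finsupp.single (j - 1) 1 - Finsupp.single j 1))
        - ((n : ℤ) - 1) * (if 1 ≤ i 1 then a (i - Finsupp.single 1 1) else 0)) :
    ∀ n : ℕ, 1 ≤ n → a (Finsupp.single 1 n) = (-1) ^ n * (n - 1).factorial := fun _ hn =>
  Int.eq_neg_one_pow_mul_factorial (f := fun n => a (single 1 n)) (hbase 1 le_rfl)
    (fun _ hk => coeff_single_one_succ hrec hk) hn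
end

section
/- With the coefficients a defined by the recursion a_{0,...,0,1} = -1 and a_{i_1,...,i_n} = Σ_{j≥2, i_j≥1}(i_{j-1}+1) a_{i_1,...,i_{j-1}+1,i_j-1,...,i_{n-1}} - (n-1)[i_1≥1] a_{i_1-1,...,i_{n-1}} for i_n = 0: for all n ≥ 2, a_{n-2,1,0,...,0} = (-1)^{n-1} (n-1)! (n-1). -/
/-! Only two shapes of index are involved. For `1^m` the sum over `j ≥ 2` is empty and the
recursion reads `a_{1^(m+1)} = -m a_{1^m}`, so `a_{1^m} = (-1)^m (m-1)!`. For `1^m 2` only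
`j = 2` contributes, and `b_m := a_{1^m 2}` satisfies `b_(m+1) = (m+2) (a_{1^(m+2)} - b_m)`;
induction from `b_0 = a_2 = -1` gives `b_m = (-1)^(m+1) (m+1)! (m+1)`. -/

open Finsupp

namespace CoeffRecursion

variable {a : (ℕ →₀ ℕ) → ℤ}

theorem single_one_succ_succ (hrec : CoeffRecursion a) (m : ℕ) :
    a (single 1 (m + 2)) = -(m + 1) * a (single 1 (m + 1)) := by
  have hsupp : (single 1 (m + 2)).support = {1} := support_single 1 (by omega)
  have h := hrec (m + 2) (by omega) (single 1 (m + 2)) (single_eq_of_ne (by omega))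
    (by rw [hsupp, Finset.sum_singleton, single_eq_same, one_mul])
    (single_eq_of_ne (by omega))
  have hpred : single 1 (m + 2) - single 1 1 = single 1 (m + 1) := by
    rw [← single_tsub]; rfl
  rw [h, hsupp, hpred, single_eq_same, if_pos (by omega)]
  simp only [Finset.filter_singleton, Nat.not_ofNat_le_one, if_false, Finset.sum_empty]
  push_cast
  ring

theorem single_one_succ (hrec : CoeffRecursion a) (ha : a (single 1 1) = -1) (m : ℕ) :
    a (single 1 (m + 1)) = (-1) ^ (m + 1) * m.factorial := by
  induction m with
  | zero => simpa using ha
  | succ m ih =>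
    rw [hrec.single_one_succ_succ, ih, Nat.factorial_succ]
    push_cast
    ring

theorem single_one_succ_add_single_two (hrec : CoeffRecursion a) (m : ℕ) :
    a (single 1 (m + 1) + single 2 1)
      = (m + 2) * a (single 1 (m + 2)) - (m + 2) * a (single 1 m + single 2 1) := by
  set i : ℕ →₀ ℕ := single 1 (m + 1) + single 2 1 with hi
  have hi1 : i 1 = m + 1 := by simp [hi]
  have hi2 : i 2 = 1 := by simp [hi]
  have hsupp : i.support = {1, 2} := by
    rw [hi, support_add_eq, support_single, support_single] <;> simp
  have h := hrec (m + 3) (by omega) i (by simp [hi])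
    (by rw [hsupp, Finset.sum_pair (by omega), hi1, hi2]; ring)
    (by simp [hi])
  have hraise : i + single 1 1 - single 2 1 = single 1 (m + 2) := by
    rw [hi, add_right_comm, ← single_add, add_tsub_cancel_right]
  have hlower : i - single 1 1 = single 1 m + single 2 1 := by
    rw [hi, single_add, add_right_comm, add_tsub_cancel_right]
  have hfilter : ({1, 2} : Finset ℕ).filter (fun j => 2 ≤ j) = {2} := by decide
  rw [h, hsupp, hfilter, Finset.sum_singleton, hi1, if_pos (by omega)]
  simp only [Nat.add_one_sub_one, hraise, hlower]
  push_cast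
  ring

theorem single_one_add_single_two (hrec : CoeffRecursion a) (ha₁ : a (single 1 1) = -1)
    (ha₂ : a (single 2 1) = -1) (m : ℕ) :
    a (single 1 m + single 2 1) = (-1) ^ (m + 1) * (m + 1).factorial * (m + 1) := by
  induction m with
  | zero => simpa using ha₂
  | succ m ih =>
    rw [hrec.single_one_succ_add_single_two, ih, hrec.single_one_succ ha₁]
    push_cast [Nat.factorial_succ]
    ring

end CoeffRecursion

/-- With the coefficients `a` defined by the stated recursion: for all `n ≥ 2`,
`a_{n-2,1,0,…,0} = (-1)^(n-1) (n-1)! (n-1)`. -/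
theorem coeff_a_two
    (a : (ℕ →₀ ℕ) → ℤ)
    (hbase : ∀ n : ℕ, 1 ≤ n → a (Finsupp.single n 1) = -1)
    (hrec : ∀ n : ℕ, 1 ≤ n → ∀ i : ℕ →₀ ℕ, i 0 = 0 →
      (∑ k ∈ i.support, k * i k) = n → i n = 0 →
      a i = (∑ j ∈ i.support.filter fun j => 2 ≤ j,
              ((i (j - 1) : ℤ) + 1) * a (i + Finsupp.single (j - 1) 1 - Finsupp.single j 1))
        - ((n : ℤ) - 1) * (if 1 ≤ i 1 then a (i - Finsupp.single 1 1) else 0)) :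
    ∀ n : ℕ, 2 ≤ n →
      a (Finsupp.single 1 (n - 2) + Finsupp.single 2 1)
        = (-1) ^ (n - 1) * (n - 1).factorial * ((n : ℤ) - 1) := by
  intro n hn
  obtain ⟨m, rfl⟩ := Nat.exists_eq_add_of_le' hn
  rw [CoeffRecursion.single_one_add_single_two hrec (hbase 1 le_rfl) (hbase 2 (by norm_num))]
  simp only [Nat.add_sub_cancel, Nat.add_succ_sub_one]
  push_cast
  ring
end

section
/- With the coefficients a defined by the recursion a_{0,...,0,1} = -1 and a_{i_1,...,i_n} = Σ_{j≥2, i_j≥1}(i_{j-1}+1) a_{i_1,...,i_{j-1}+1,i_j-1,...,i_{n-1}} - (n-1)[i_1≥1] a_{i_1-1,...,i_{n-1}} for i_n = 0: for all n ≥ 3, the coefficient a_{1,0,...,0,1,0} (with 1 in positions 1 and n-1) equals n(n-1)/2 + 1. -/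
/-! Write `b m` for the coefficient at `e₁ + eₘ`, so that `b (n - 1)` is the coefficient in question.
At `e₁ + e₁ = 2e₁` only the last term `1 · a(e₁) = -1` of the recursion survives, so `b 1 = 1`.
For `m ≥ 2` the recursion at `e₁ + eₘ` has a single summand, from `j = m`, and its last term is
`m · a(eₘ) = -m`; so `b 2 = 2 · b 1 + 2 = 4`, the factor `2` because `e₁ + e₁` has a `1` in
position `m - 1 = 1`, and `b m = b (m - 1) + m` for `m ≥ 3`. Summing, `b m = m(m+1)/2 + 1`. -/

open Finsupp

def SatisfiesCoeffRecursion (a : (ℕ →₀ ℕ) → ℤ) : Prop :=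
  ∀ n : ℕ, 1 ≤ n → ∀ i : ℕ →₀ ℕ, i 0 = 0 →
    (∑ k ∈ i.support, k * i k) = n → i n = 0 →
    a i = (∑ j ∈ i.support.filter fun j => 2 ≤ j,
            ((i (j - 1) : ℤ) + 1) * a (i + single (j - 1) 1 - single j 1))
      - ((n : ℤ) - 1) * (if 1 ≤ i 1 then a (i - single 1 1) else 0)

theorem coeff_single_one_two {a : (ℕ →₀ ℕ) → ℤ} (hbase : a (single 1 1) = -1)
    (hrec : SatisfiesCoeffRecursion a) : a (single 1 2) = 1 := by
  have hsupp : (single 1 2 : ℕ →₀ ℕ).support = {1} := support_single _ two_ne_zero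
  have hsub : (single 1 2 : ℕ →₀ ℕ) - single 1 1 = single 1 1 := by
    rw [← single_tsub]
  rw [hrec 2 one_le_two _ (by simp) (by simp) (by simp), hsupp]
  simp [Finset.filter_singleton, hsub, hbase]

theorem coeff_single_one_add_single {a : (ℕ →₀ ℕ) → ℤ} {m : ℕ} (hm : 2 ≤ m)
    (hbase : a (single m 1) = -1) (hrec : SatisfiesCoeffRecursion a) :
    a (single 1 1 + single m 1)
      = ((single 1 1 : ℕ →₀ ℕ) (m - 1) + 1) * a (single 1 1 + single (m - 1) 1) + m := by
  set i : ℕ →₀ ℕ := single 1 1 + single m 1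
  have hne : 1 ≠ m := by omega
  have hsupp : i.support = {1, m} := support_single_add_single hne one_ne_zero one_ne_zero
  have hweight : ∑ k ∈ i.support, k * i k = m + 1 := by
    rw [hsupp, Finset.sum_pair hne]
    simp [i, hne]
    omega
  have hfilter : ({1, m} : Finset ℕ).filter (fun j => 2 ≤ j) = {m} := by
    ext j; simp; omega
  have hi_pred : i (m - 1) = (single 1 1 : ℕ →₀ ℕ) (m - 1) := by
    simp [i, single_apply]; omega
  have hi_one : i 1 = 1 := by simp [i, hne]
  rw [hrec (m + 1) (by omega) i (by simp [i, single_apply]; omega) hweight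
      (by simp [i, single_apply]; omega),
    hsupp, hfilter, Finset.sum_singleton, hi_pred, hi_one, if_pos le_rfl, add_right_comm,
    add_tsub_cancel_right, add_tsub_cancel_left, hbase]
  push_cast
  ring

theorem two_mul_coeff_single_one_add_single {a : (ℕ →₀ ℕ) → ℤ}
    (hbase : ∀ n : ℕ, 1 ≤ n → a (single n 1) = -1) (hrec : SatisfiesCoeffRecursion a)
    {m : ℕ} (hm : 2 ≤ m) :
    2 * a (single 1 1 + single m 1) = (m + 1) * m + 2 := by
  induction m, hm using Nat.le_induction with
  | base =>
    have hdouble : (single 1 1 + single 1 1 : ℕ →₀ ℕ) = single 1 2 := (single_add _ _ _).symm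
    rw [coeff_single_one_add_single le_rfl (hbase 2 one_le_two) hrec, show 2 - 1 = 1 from rfl,
      hdouble, coeff_single_one_two (hbase 1 le_rfl) hrec]
    norm_num
  | succ m hm ih =>
    rw [coeff_single_one_add_single (by omega) (hbase _ (by omega)) hrec, Nat.add_sub_cancel,
      single_eq_of_ne (by omega)]
    push_cast
    linarith

/-- With the coefficients `a` defined by the stated recursion: for all `n ≥ 3`,
`a_{1,0,…,0,1,0}` (with `1` in positions `1` and `n-1`) equals `n(n-1)/2 + 1`. -/
theorem coeff_a_one_and_penultimate
    (a : (ℕ →₀ ℕ) → ℤ)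
    (hbase : ∀ n : ℕ, 1 ≤ n → a (Finsupp.single n 1) = -1)
    (hrec : ∀ n : ℕ, 1 ≤ n → ∀ i : ℕ →₀ ℕ, i 0 = 0 →
      (∑ k ∈ i.support, k * i k) = n → i n = 0 →
      a i = (∑ j ∈ i.support.filter fun j => 2 ≤ j,
              ((i (j - 1) : ℤ) + 1) * a (i + Finsupp.single (j - 1) 1 - Finsupp.single j 1))
        - ((n : ℤ) - 1) * (if 1 ≤ i 1 then a (i - Finsupp.single 1 1) else 0)) :
    ∀ n : ℕ, 3 ≤ n →
      (a (Finsupp.single 1 1 + Finsupp.single (n - 1) 1) : ℚ)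
        = (n : ℚ) * ((n : ℚ) - 1) / 2 + 1 := by
  intro n hn
  obtain ⟨m, rfl⟩ : ∃ m, n = m + 1 := ⟨n - 1, by omega⟩
  have h : (2 * a (single 1 1 + single m 1) : ℚ) = (m + 1) * m + 2 := by
    exact_mod_cast two_mul_coeff_single_one_add_single hbase hrec (by omega : 2 ≤ m)
  rw [Nat.add_sub_cancel]
  push_cast
  linarith
end

section
/- Define polynomials P indexed by dominant sequences (i_2,...,i_n) of weight ≥ 1 by: P_{(1)} = X_1, P_{(2)} = (X_1-2)(X_1-1), P_{(0,1)} = X_1 - 1, and for weight ≥ 3, P_{i_2,...,i_n} = Σ_{j≥3, i_j≥1}(i_{j-1}+1) P_{∂(i_2,...,i_{j-1}+1,i_j-1,...,i_n)} + [i_2≥1](X_N - 2i_2 - ... - n i_n + 2) P_{∂(i_2-1,i_3,...,i_n)}, where N = ω(i_2,...,i_n). Then for every dominant sequence (i_2,...,i_n) of weight ≥ 1, the total degree of P_{i_2,...,i_n} equals i_2 + ... + i_n. -/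
/-!
Induct on the weight, which every branch of the recursion lowers by exactly one, carrying the
stronger invariant that `P_i` has total degree at most `|i| = i_2 + ⋯ + i_n` and that its
coefficients in degree `|i|` are nonnegative and not all zero. Nonnegativity rules out
cancellation between the top-degree parts of the summands; the coefficients `i_{j-1} + 1`
are positive; moving a part from `j` to `j - 1` keeps `|i|`; and multiplying by `X_N - c` raises
the top degree by one, exactly compensating for the part `2` that was removed.
-/

open MvPolynomial

namespace Finsupp

variable {ι : Type*} {i : ι →₀ ℕ} {j k : ι}

lemma add_single_sub_single_eq (hkj : k ≠ j) :
    i + single k 1 - single j 1 = i - single j 1 + single k 1 := by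
  classical
  ext l
  by_cases hk : k = l <;> by_cases hj : j = l <;> simp_all

lemma add_single_sub_single_apply_of_ne {l : ι} (hlk : k ≠ l) (hlj : j ≠ l) :
    (i + single k 1 - single j 1 : ι →₀ ℕ) l = i l := by
  simp [hlk, hlj]

lemma degree_sub_single_add (hij : i j ≠ 0) : (i - single j 1).degree + 1 = i.degree := by
  conv_rhs => rw [← sub_add_single_one_cancel hij]
  rw [map_add, degree_single]

lemma degree_add_single_sub_single (hkj : k ≠ j) (hij : i j ≠ 0) :
    (i + single k 1 - single j 1).degree = i.degree := by
  rw [add_single_sub_single_eq hkj, map_add, degree_single, degree_sub_single_add hij]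

end Finsupp

namespace MvPolynomial

variable {σ R : Type*} [CommRing R] [LinearOrder R]

def HasNonnegTopCoeffs (d : ℕ) (p : MvPolynomial σ R) : Prop :=
  p.totalDegree ≤ d ∧ ∀ m : σ →₀ ℕ, m.degree = d → 0 ≤ p.coeff m

def HasPosTopCoeff (d : ℕ) (p : MvPolynomial σ R) : Prop :=
  HasNonnegTopCoeffs d p ∧ ∃ m : σ →₀ ℕ, m.degree = d ∧ 0 < p.coeff m

variable {d : ℕ} {p q : MvPolynomial σ R}

lemma hasNonnegTopCoeffs_zero : HasNonnegTopCoeffs d (0 : MvPolynomial σ R) :=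
  ⟨by simp, fun _ _ => by simp⟩

lemma HasPosTopCoeff.totalDegree_eq (hp : HasPosTopCoeff d p) : p.totalDegree = d := by
  obtain ⟨⟨hle, -⟩, m, rfl, hm⟩ := hp
  exact hle.antisymm (le_totalDegree (mem_support_iff.2 hm.ne'))

variable [IsStrictOrderedRing R]

lemma HasNonnegTopCoeffs.add (hp : HasNonnegTopCoeffs d p) (hq : HasNonnegTopCoeffs d q) :
    HasNonnegTopCoeffs d (p + q) :=
  ⟨(totalDegree_add p q).trans (max_le hp.1 hq.1),
    fun m hm => by rw [coeff_add]; exact add_nonneg (hp.2 m hm) (hq.2 m hm)⟩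

lemma HasNonnegTopCoeffs.sum {ι : Type*} {s : Finset ι} {f : ι → MvPolynomial σ R}
    (hf : ∀ j ∈ s, HasNonnegTopCoeffs d (f j)) : HasNonnegTopCoeffs d (∑ j ∈ s, f j) :=
  Finset.sum_induction f (HasNonnegTopCoeffs d) (fun _ _ => HasNonnegTopCoeffs.add)
    hasNonnegTopCoeffs_zero hf

lemma HasPosTopCoeff.add_hasNonnegTopCoeffs (hp : HasPosTopCoeff d p)
    (hq : HasNonnegTopCoeffs d q) : HasPosTopCoeff d (p + q) := by
  obtain ⟨hp, m, hmd, hm⟩ := hp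
  refine ⟨hp.add hq, m, hmd, ?_⟩
  rw [coeff_add]
  exact add_pos_of_pos_of_nonneg hm (hq.2 m hmd)

lemma HasNonnegTopCoeffs.C_mul {c : R} (hc : 0 ≤ c) (hp : HasNonnegTopCoeffs d p) :
    HasNonnegTopCoeffs d (C c * p) :=
  ⟨(totalDegree_mul _ _).trans (by rw [totalDegree_C, zero_add]; exact hp.1),
    fun m hm => by rw [coeff_C_mul]; exact mul_nonneg hc (hp.2 m hm)⟩

lemma HasPosTopCoeff.C_mul {c : R} (hc : 0 < c) (hp : HasPosTopCoeff d p) :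
    HasPosTopCoeff d (C c * p) := by
  obtain ⟨hp, m, hmd, hm⟩ := hp
  exact ⟨hp.C_mul hc.le, m, hmd, by rw [coeff_C_mul]; exact mul_pos hc hm⟩

lemma HasPosTopCoeff.sum {ι : Type*} {s : Finset ι} {f : ι → MvPolynomial σ R}
    (hs : s.Nonempty) (hf : ∀ j ∈ s, HasPosTopCoeff d (f j)) :
    HasPosTopCoeff d (∑ j ∈ s, f j) := by
  classical
  obtain ⟨j, hj⟩ := hs
  rw [← Finset.add_sum_erase s f hj]
  exact (hf j hj).add_hasNonnegTopCoeffs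
    (HasNonnegTopCoeffs.sum fun k hk => (hf k (Finset.mem_of_mem_erase hk)).1)

lemma hasPosTopCoeff_one : HasPosTopCoeff 0 (1 : MvPolynomial σ R) :=
  ⟨⟨totalDegree_one.le, fun m hm => by
    rw [(Finsupp.degree_eq_zero_iff m).1 hm, coeff_zero_one]; exact zero_le_one⟩,
    0, map_zero _, by rw [coeff_zero_one]; exact zero_lt_one⟩

/-- The constant term `c` cannot reach the top degree, so only `X a * p` contributes there. -/
lemma HasPosTopCoeff.X_sub_C_mul (hp : HasPosTopCoeff d p) (a : σ) (c : R) :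
    HasPosTopCoeff (d + 1) ((X a - C c) * p) := by
  classical
  obtain ⟨⟨hle, hnonneg⟩, m, hmd, hm⟩ := hp
  have hdeg : ((X a - C c) * p).totalDegree ≤ d + 1 :=
    (totalDegree_mul _ _).trans (by
      rw [add_comm]
      exact add_le_add hle ((totalDegree_sub_C_le _ _).trans_eq (totalDegree_X a)))
  have hcoeff : ∀ n : σ →₀ ℕ, n.degree = d + 1 →
      ((X a - C c) * p).coeff n = (X a * p).coeff n := fun n hn => by
    rw [sub_mul, coeff_sub, coeff_C_mul,
      coeff_eq_zero_of_totalDegree_lt (f := p) (by rw [← Finsupp.degree_apply, hn]; omega),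
      mul_zero, sub_zero]
  refine ⟨⟨hdeg, fun n hn => ?_⟩, Finsupp.single a 1 + m, ?_, ?_⟩
  · rw [hcoeff n hn, coeff_X_mul']
    split_ifs with ha
    · apply hnonneg
      have := Finsupp.degree_sub_single_add (Finsupp.mem_support_iff.1 ha)
      omega
    · exact le_rfl
  · rw [map_add, Finsupp.degree_single, hmd, add_comm]
  · rw [hcoeff _ (by rw [map_add, Finsupp.degree_single, hmd, add_comm]), coeff_X_mul]
    exact hm

lemma hasPosTopCoeff_X_sub_C (a : σ) (c : R) : HasPosTopCoeff 1 (X a - C c) := by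
  simpa using hasPosTopCoeff_one.X_sub_C_mul a c

end MvPolynomial

open Finsupp

/-- `i.weight (· - 1)` is `ω(i) + 1`. -/
lemma sum_sub_one_mul_eq_weight (i : ℕ →₀ ℕ) :
    ∑ k ∈ i.support, (k - 1) * i k = i.weight (· - 1) := by
  simp only [weight_apply, Finsupp.sum, smul_eq_mul, mul_comm]

lemma weight_add_single_pred_sub_single {i : ℕ →₀ ℕ} {j : ℕ} (hj : 2 ≤ j) (hij : i j ≠ 0) :
    (i + single (j - 1) 1 - single j 1).weight (· - 1) + 1 = i.weight (· - 1) := by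
  have h := weight_sub_single_add (w := (· - 1)) hij
  rw [add_single_sub_single_eq (by omega), map_add, weight_single]
  simp only [smul_eq_mul, one_mul] at h ⊢
  omega

lemma eq_single_of_weight_eq_two {i : ℕ →₀ ℕ} (h0 : i 0 = 0) (h1 : i 1 = 0)
    (hw : i.weight (· - 1) = 2) : i = single 2 2 ∨ i = single 3 1 := by
  have hsupp : ∀ k, i k ≠ 0 → k = 2 ∨ k = 3 := fun k hk => by
    have := le_weight_of_ne_zero' (· - 1) hk
    have : k ≠ 0 := by rintro rfl; exact hk h0
    have : k ≠ 1 := by rintro rfl; exact hk h1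
    omega
  have hi : i = single 2 (i 2) + single 3 (i 3) := by
    ext k
    have := hsupp k
    simp only [Finsupp.coe_add, Pi.add_apply, single_apply]
    split_ifs <;> subst_vars <;> omega
  rw [hi, map_add, weight_single, weight_single, smul_eq_mul, smul_eq_mul] at hw
  rcases (by omega : i 2 = 2 ∧ i 3 = 0 ∨ i 2 = 0 ∧ i 3 = 1) with ⟨h2, h3⟩ | ⟨h2, h3⟩ <;>
    rw [hi, h2, h3] <;> simp

section Recursion

variable {σ R : Type*} [CommRing R] [LinearOrder R] [IsStrictOrderedRing R]

lemma hasPosTopCoeff_of_recursion {P : (ℕ →₀ ℕ) → MvPolynomial σ R} {i : ℕ →₀ ℕ}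
    (h0 : i 0 = 0) (h1 : i 1 = 0) (hi : i ≠ 0) {c : ℕ → R} (hc : ∀ j, 0 < c j) (a : σ) (b : R)
    (hrec : P i = (∑ j ∈ i.support.filter fun j => 3 ≤ j,
        C (c j) * P (i + single (j - 1) 1 - single j 1))
      + if 1 ≤ i 2 then (X a - C b) * P (i - single 2 1) else 0)
    (IH : ∀ i' : ℕ →₀ ℕ, i' 0 = 0 → i' 1 = 0 → i'.weight (· - 1) + 1 = i.weight (· - 1) →
      HasPosTopCoeff i'.degree (P i')) :
    HasPosTopCoeff i.degree (P i) := by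
  have hlower : ∀ j ∈ i.support.filter fun j => 3 ≤ j,
      HasPosTopCoeff i.degree (C (c j) * P (i + single (j - 1) 1 - single j 1)) := by
    intro j hj
    obtain ⟨hij, hj3⟩ := Finset.mem_filter.1 hj
    rw [Finsupp.mem_support_iff] at hij
    rw [← degree_add_single_sub_single (k := j - 1) (by omega) hij]
    exact (IH _ ((add_single_sub_single_apply_of_ne (by omega) (by omega)).trans h0)
      ((add_single_sub_single_apply_of_ne (by omega) (by omega)).trans h1)
      (weight_add_single_pred_sub_single (by omega) hij)).C_mul (hc j)
  by_cases h2 : 1 ≤ i 2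
  · have hi2 : i 2 ≠ 0 := by omega
    rw [hrec, if_pos h2, add_comm, ← degree_sub_single_add hi2]
    refine HasPosTopCoeff.add_hasNonnegTopCoeffs (HasPosTopCoeff.X_sub_C_mul ?_ a b)
      (HasNonnegTopCoeffs.sum fun j hj => ?_)
    · refine IH _ (by simp [h0]) (by simp [h1]) ?_
      simpa using weight_sub_single_add (w := (· - 1)) hi2
    · rw [degree_sub_single_add hi2]
      exact (hlower j hj).1
  · rw [hrec, if_neg h2, add_zero]
    refine HasPosTopCoeff.sum ?_ hlower
    obtain ⟨j, hj⟩ := Finsupp.support_nonempty_iff.2 hi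
    have hij := Finsupp.mem_support_iff.1 hj
    have : j ≠ 0 := by rintro rfl; exact hij h0
    have : j ≠ 1 := by rintro rfl; exact hij h1
    have : j ≠ 2 := by rintro rfl; omega
    exact ⟨j, Finset.mem_filter.2 ⟨hj, by omega⟩⟩

end Recursion

theorem poly_P_totalDegree_general
    (P : (ℕ →₀ ℕ) → MvPolynomial ℕ ℤ)
    (hP2 : P (Finsupp.single 2 2) = (X 1 - C 2) * (X 1 - C 1))
    (hP01 : P (Finsupp.single 3 1) = X 1 - C 1)
    (hPrec : ∀ i : ℕ →₀ ℕ, i 0 = 0 → i 1 = 0 →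
      2 ≤ (∑ k ∈ i.support, (k - 1) * i k) - 1 →
      P i = (∑ j ∈ i.support.filter fun j => 3 ≤ j,
              C ((i (j - 1) : ℤ) + 1)
                * P (i + Finsupp.single (j - 1) 1 - Finsupp.single j 1))
        + (if 1 ≤ i 2 then
            (X ((∑ k ∈ i.support, (k - 1) * i k) - 1)
                - C (((∑ k ∈ i.support, k * i k : ℕ) : ℤ) - 2))
              * P (i - Finsupp.single 2 1)
          else 0)) :
    ∀ i : ℕ →₀ ℕ, i 0 = 0 → i 1 = 0 →
      1 ≤ (∑ k ∈ i.support, (k - 1) * i k) - 1 →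
      (P i).totalDegree = ∑ k ∈ i.support, i k := by
  simp only [sum_sub_one_mul_eq_weight, ← degree_apply] at hPrec ⊢
  suffices h : ∀ n ≥ 2, ∀ i : ℕ →₀ ℕ, i 0 = 0 → i 1 = 0 → i.weight (· - 1) = n →
      HasPosTopCoeff i.degree (P i) from
    fun i h0 h1 hw => (h _ (by omega) i h0 h1 rfl).totalDegree_eq
  intro n hn
  induction n, hn using Nat.le_induction with
  | base =>
    intro i h0 h1 hw
    rcases eq_single_of_weight_eq_two h0 h1 hw with rfl | rfl
    · rw [hP2, degree_single]
      exact (hasPosTopCoeff_X_sub_C 1 1).X_sub_C_mul 1 2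
    · rw [hP01, degree_single]
      exact hasPosTopCoeff_X_sub_C 1 1
  | succ n hn IH =>
    intro i h0 h1 hw
    have hi : i ≠ 0 := by rintro rfl; simp at hw
    exact hasPosTopCoeff_of_recursion h0 h1 hi (fun j => by positivity) _ _
      (hPrec i h0 h1 (by omega)) fun i' h0' h1' hw' => IH i' h0' h1' (by omega)

/-- Let `P` be the polynomials indexed by dominant sequences `(i_2,…,i_n)` (encoded as
finitely supported functions `i : ℕ →₀ ℕ` vanishing at `0` and `1`, `i k` being the
multiplicity `i_k`; trailing zeros are automatically absent, so the truncation `∂` is the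
identity in this encoding), of weight `ω = Σ_{k ≥ 2} (k-1) i_k - 1`, defined by
`P_{(1)} = X_1`, `P_{(2)} = (X_1-2)(X_1-1)`, `P_{(0,1)} = X_1-1` and, for weight `≥ 2`,
`P_{i_2,…,i_n} = Σ_{j ≥ 3, i_j ≥ 1} (i_{j-1}+1) P_{∂(i_2,…,i_{j-1}+1,i_j-1,…,i_n)}
  + [i_2 ≥ 1](X_ω - 2i_2 - … - n i_n + 2) P_{∂(i_2-1,i_3,…,i_n)}`.
Then for every dominant sequence of weight `≥ 1`, the total degree of `P_{i_2,…,i_n}`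
equals `i_2 + … + i_n`. -/
theorem poly_P_totalDegree
    (P : (ℕ →₀ ℕ) → MvPolynomial ℕ ℤ)
    (hP1 : P (Finsupp.single 2 1) = X 1)
    (hP2 : P (Finsupp.single 2 2) = (X 1 - C 2) * (X 1 - C 1))
    (hP01 : P (Finsupp.single 3 1) = X 1 - C 1)
    (hPrec : ∀ i : ℕ →₀ ℕ, i 0 = 0 → i 1 = 0 →
      2 ≤ (∑ k ∈ i.support, (k - 1) * i k) - 1 →
      P i = (∑ j ∈ i.support.filter fun j => 3 ≤ j,
              C ((i (j - 1) : ℤ) + 1)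
                * P (i + Finsupp.single (j - 1) 1 - Finsupp.single j 1))
        + (if 1 ≤ i 2 then
            (X ((∑ k ∈ i.support, (k - 1) * i k) - 1)
                - C (((∑ k ∈ i.support, k * i k : ℕ) : ℤ) - 2))
              * P (i - Finsupp.single 2 1)
          else 0)) :
    ∀ i : ℕ →₀ ℕ, i 0 = 0 → i 1 = 0 →
      1 ≤ (∑ k ∈ i.support, (k - 1) * i k) - 1 →
      (P i).totalDegree = ∑ k ∈ i.support, i k :=
  poly_P_totalDegree_general P hP2 hP01 hPrec
end

section
/- With the polynomials P defined by the recursion (P_{(2)} = (X_1-2)(X_1-1), P_{(0,1)} = X_1-1, and the inductive formula for weight ≥ 3), every P_{i_2,...,i_n} for a dominant sequence of weight ≥ 1 is divisible by X_1 - 1 in ℤ[X_1,...,X_N], except the base case P_{(1)} = X_1. -/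
/-!
Each polynomial on the right-hand side of the recursion is a multiple of some `P_c` with `c`
dominant of weight one less, so by induction on the weight everything reduces to weight
`ω = 1`. There the only dominant sequences are `(2)` and `(0,1)`, and `P_{(2)}`, `P_{(0,1)}`
are visibly multiples of `X_1 - 1`.

Below, `Finsupp.weight (· - 1) i = ∑ (k - 1) i_k` is the paper's `ω + 1`.
-/

open MvPolynomial

def SatisfiesPRecursion (P : (ℕ →₀ ℕ) → MvPolynomial ℕ ℤ) : Prop :=
  ∀ i : ℕ →₀ ℕ, i 0 = 0 → i 1 = 0 →
    2 ≤ (∑ k ∈ i.support, (k - 1) * i k) - 1 →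
    P i = (∑ j ∈ i.support.filter fun j => 3 ≤ j,
            C ((i (j - 1) : ℤ) + 1)
              * P (i + Finsupp.single (j - 1) 1 - Finsupp.single j 1))
      + (if 1 ≤ i 2 then
          (X ((∑ k ∈ i.support, (k - 1) * i k) - 1)
              - C (((∑ k ∈ i.support, k * i k : ℕ) : ℤ) - 2))
            * P (i - Finsupp.single 2 1)
        else 0)

namespace Finsupp

variable {σ M : Type*}

theorem add_single_sub_single_apply_of_ne_s12 [DecidableEq σ] (f : σ →₀ ℕ) {a b k : σ}
    (hka : k ≠ a) (hkb : k ≠ b) : (f + single a 1 - single b 1 : σ →₀ ℕ) k = f k := by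
  simp [hka, hkb]

theorem weight_add_single_sub_single_add [AddCommMonoid M] (w : σ → M) {f : σ →₀ ℕ}
    {a b : σ} (hab : a ≠ b) (hb : f b ≠ 0) :
    weight w (f + single a 1 - single b 1) + w b = weight w f + w a := by
  classical
  rw [weight_sub_single_add (by simpa [single_apply, hab] using hb), map_add, weight_single,
    one_smul]

theorem sum_support_pred_mul_eq_weight (i : ℕ →₀ ℕ) :
    ∑ k ∈ i.support, (k - 1) * i k = weight (· - 1) i := by
  simp [weight_apply, Finsupp.sum, mul_comm]

theorem eq_single_two_two_or_single_three_one {i : ℕ →₀ ℕ} (h0 : i 0 = 0) (h1 : i 1 = 0)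
    (hw : weight (· - 1) i = 2) : i = single 2 2 ∨ i = single 3 1 := by
  have hbig : ∀ k, 4 ≤ k → i k = 0 := fun k hk => by
    by_contra hik
    have := weight_sub_single_add (w := (· - 1)) hik
    omega
  have hi : i = single 2 (i 2) + single 3 (i 3) := by
    ext (_ | _ | _ | _ | k)
    · simp [h0]
    · simp [h1]
    · simp
    · simp
    · simp [hbig (k + 4) (by omega)]
  rw [hi, map_add, weight_single, weight_single] at hw
  simp only [smul_eq_mul] at hw
  rcases (by omega : (i 2 = 2 ∧ i 3 = 0) ∨ (i 2 = 0 ∧ i 3 = 1)) with ⟨h2, h3⟩ | ⟨h2, h3⟩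
  · left; rw [hi, h2, h3]; simp
  · right; rw [hi, h2, h3]; simp

end Finsupp

open Finsupp in
theorem SatisfiesPRecursion.dvd_of_weight_eq_add_two {P : (ℕ →₀ ℕ) → MvPolynomial ℕ ℤ}
    (hPrec : SatisfiesPRecursion P)
    (hP2 : P (single 2 2) = (X 1 - C 2) * (X 1 - C 1)) (hP01 : P (single 3 1) = X 1 - C 1) :
    ∀ n (i : ℕ →₀ ℕ), i 0 = 0 → i 1 = 0 → weight (· - 1) i = n + 2 → (X 1 - C 1) ∣ P i
  | 0, i, h0, h1, hw => by
    rcases eq_single_two_two_or_single_three_one h0 h1 hw with rfl | rfl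
    · rw [hP2]; exact dvd_mul_left _ _
    · rw [hP01]
  | n + 1, i, h0, h1, hw => by
    have ih := hPrec.dvd_of_weight_eq_add_two hP2 hP01 n
    rw [hPrec i h0 h1 (by rw [sum_support_pred_mul_eq_weight]; omega)]
    refine dvd_add (Finset.dvd_sum fun j hj => dvd_mul_of_dvd_right ?_ _) ?_
    · obtain ⟨hij, hj⟩ : j ∈ i.support ∧ 3 ≤ j := Finset.mem_filter.1 hj
      have hw' := weight_add_single_sub_single_add (· - 1) (by omega : j - 1 ≠ j)
        (mem_support_iff.1 hij)
      refine ih _ ?_ ?_ (by omega)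
      · exact (add_single_sub_single_apply_of_ne_s12 i (show 0 ≠ j - 1 by omega)
          (show 0 ≠ j by omega)).trans h0
      · exact (add_single_sub_single_apply_of_ne_s12 i (show 1 ≠ j - 1 by omega)
          (show 1 ≠ j by omega)).trans h1
    · split_ifs with h2
      · have hw' := weight_sub_single_add (w := (· - 1)) (by omega : i 2 ≠ 0)
        exact dvd_mul_of_dvd_right (ih _ (by simp [h0]) (by simp [h1]) (by omega)) _
      · exact dvd_zero _

theorem poly_P_dvd_X_sub_one_general
    (P : (ℕ →₀ ℕ) → MvPolynomial ℕ ℤ)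
    (hP2 : P (Finsupp.single 2 2) = (X 1 - C 2) * (X 1 - C 1))
    (hP01 : P (Finsupp.single 3 1) = X 1 - C 1)
    (hPrec : ∀ i : ℕ →₀ ℕ, i 0 = 0 → i 1 = 0 →
      2 ≤ (∑ k ∈ i.support, (k - 1) * i k) - 1 →
      P i = (∑ j ∈ i.support.filter fun j => 3 ≤ j,
              C ((i (j - 1) : ℤ) + 1)
                * P (i + Finsupp.single (j - 1) 1 - Finsupp.single j 1))
        + (if 1 ≤ i 2 then
            (X ((∑ k ∈ i.support, (k - 1) * i k) - 1)
                - C (((∑ k ∈ i.support, k * i k : ℕ) : ℤ) - 2))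
              * P (i - Finsupp.single 2 1)
          else 0)) :
    ∀ i : ℕ →₀ ℕ, i 0 = 0 → i 1 = 0 →
      1 ≤ (∑ k ∈ i.support, (k - 1) * i k) - 1 → i ≠ Finsupp.single 2 1 →
      (X 1 - C 1) ∣ P i := by
  intro i h0 h1 hw _
  rw [Finsupp.sum_support_pred_mul_eq_weight] at hw
  obtain ⟨n, hn⟩ := Nat.exists_eq_add_of_le' (by omega : 2 ≤ Finsupp.weight (· - 1) i)
  exact SatisfiesPRecursion.dvd_of_weight_eq_add_two hPrec hP2 hP01 n i h0 h1 hn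

/-- Let `P` be the polynomials indexed by dominant sequences `(i_2,…,i_n)` (encoded as
finitely supported functions `i : ℕ →₀ ℕ` vanishing at `0` and `1`, `i k` being the
multiplicity `i_k`; trailing zeros are automatically absent, so the truncation `∂` is the
identity in this encoding), of weight `ω = Σ_{k ≥ 2} (k-1) i_k - 1`, defined by
`P_{(1)} = X_1`, `P_{(2)} = (X_1-2)(X_1-1)`, `P_{(0,1)} = X_1-1` and, for weight `≥ 2`,
`P_{i_2,…,i_n} = Σ_{j ≥ 3, i_j ≥ 1} (i_{j-1}+1) P_{∂(i_2,…,i_{j-1}+1,i_j-1,…,i_n)}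
  + [i_2 ≥ 1](X_ω - 2i_2 - … - n i_n + 2) P_{∂(i_2-1,i_3,…,i_n)}`.
Then every `P_{i_2,…,i_n}` for a dominant sequence of weight `≥ 1`, except the base case
`P_{(1)} = X_1`, is divisible by `X_1 - 1`. -/
theorem poly_P_dvd_X_sub_one
    (P : (ℕ →₀ ℕ) → MvPolynomial ℕ ℤ)
    (hP1 : P (Finsupp.single 2 1) = X 1)
    (hP2 : P (Finsupp.single 2 2) = (X 1 - C 2) * (X 1 - C 1))
    (hP01 : P (Finsupp.single 3 1) = X 1 - C 1)
    (hPrec : ∀ i : ℕ →₀ ℕ, i 0 = 0 → i 1 = 0 →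
      2 ≤ (∑ k ∈ i.support, (k - 1) * i k) - 1 →
      P i = (∑ j ∈ i.support.filter fun j => 3 ≤ j,
              C ((i (j - 1) : ℤ) + 1)
                * P (i + Finsupp.single (j - 1) 1 - Finsupp.single j 1))
        + (if 1 ≤ i 2 then
            (X ((∑ k ∈ i.support, (k - 1) * i k) - 1)
                - C (((∑ k ∈ i.support, k * i k : ℕ) : ℤ) - 2))
              * P (i - Finsupp.single 2 1)
          else 0)) :
    ∀ i : ℕ →₀ ℕ, i 0 = 0 → i 1 = 0 →
      1 ≤ (∑ k ∈ i.support, (k - 1) * i k) - 1 → i ≠ Finsupp.single 2 1 →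
      (X 1 - C 1) ∣ P i :=
  poly_P_dvd_X_sub_one_general P hP2 hP01 hPrec
end

section
/- Let (i_2,...,i_n) be a dominant sequence of weight N ≥ 2 and let P_{i_2,...,i_n} ∈ ℤ[X_1,...,X_N] be defined by the recursion (P_{(2)} = (X_1-2)(X_1-1), P_{(0,1)} = X_1-1, inductive formula for weight ≥ 3). If p_1 < p_2 < ... < p_N are natural numbers with 1 ≤ p_1 and p_N ≤ 2i_2 + 3i_3 + ... + n·i_n - 2, then P_{i_2,...,i_n}(p_1,...,p_N) = 0. -/
/-!
Induction on the weight. In the recursion, each shift `(…, i_{j-1}+1, i_j-1, …)` lowers both the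
weight and `Σ k i_k` by one, while deleting a `2` lowers the weight by one and `Σ k i_k` by two.
Since `p_{N-1} < p_N ≤ Σ k i_k - 2`, the points `p_1 < … < p_{N-1}` satisfy the bound for every
shifted sequence, and also for `(i_2 - 1, i_3, …)` unless `p_N = Σ k i_k - 2`, in which case the
factor `X_N - Σ k i_k + 2` vanishes instead. Weight `1`, i.e. `(2)` and `(0,1)`, is checked by hand.
-/

open MvPolynomial Finsupp

def weightedSum (c : ℕ → ℕ) (i : ℕ →₀ ℕ) : ℕ := ∑ k ∈ i.support, c k * i k

theorem weightedSum_add_single (c : ℕ → ℕ) (i : ℕ →₀ ℕ) (a : ℕ) :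
    weightedSum c (i + single a 1) = weightedSum c i + c a := by
  have h := sum_add_index' (f := i) (g := single a 1) (h := fun k m => c k * m)
    (fun _ => mul_zero _) (fun _ _ _ => mul_add _ _ _)
  simpa [weightedSum, Finsupp.sum, sum_single_index] using h

theorem weightedSum_tsub_single_add (c : ℕ → ℕ) {i : ℕ →₀ ℕ} {a : ℕ} (h : 1 ≤ i a) :
    weightedSum c (i - single a 1) + c a = weightedSum c i := by
  rw [← weightedSum_add_single, tsub_add_cancel_of_le (single_le_iff.2 h)]

theorem weightedSum_add_single_tsub_single_add (c : ℕ → ℕ) {i : ℕ →₀ ℕ} (a : ℕ) {b : ℕ}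
    (h : 1 ≤ i b) :
    weightedSum c (i + single a 1 - single b 1) + c b = weightedSum c i + c a := by
  rw [weightedSum_tsub_single_add c (i := i + single a 1) (by simp only [Finsupp.coe_add, Pi.add_apply]; omega),
    weightedSum_add_single]

@[simp]
theorem weightedSum_single (c : ℕ → ℕ) (a m : ℕ) : weightedSum c (single a m) = c a * m := by
  rcases eq_or_ne m 0 with rfl | hm
  · simp [weightedSum]
  · simp [weightedSum, support_single a hm]

theorem add_single_tsub_single_apply_eq_zero {i : ℕ →₀ ℕ} {a b k : ℕ} (hk : i k = 0)
    (hak : k ≠ a) : (i + single a 1 - single b 1 : ℕ →₀ ℕ) k = 0 := by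
  simp [hk, single_eq_of_ne hak]

theorem mul_apply_le_weightedSum (c : ℕ → ℕ) (i : ℕ →₀ ℕ) (k : ℕ) :
    c k * i k ≤ weightedSum c i := by
  by_cases hk : k ∈ i.support
  · exact Finset.single_le_sum (f := fun k => c k * i k) (fun _ _ => Nat.zero_le _) hk
  · simp [notMem_support_iff.1 hk]

theorem eq_single_two_two_or_single_three_one {i : ℕ →₀ ℕ} (h0 : i 0 = 0) (h1 : i 1 = 0)
    (hw : weightedSum (· - 1) i = 2) : i = single 2 2 ∨ i = single 3 1 := by
  have hbig : ∀ k, 4 ≤ k → i k = 0 := fun k hk => by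
    have := mul_apply_le_weightedSum (· - 1) i k
    have : 3 * i k ≤ (k - 1) * i k := Nat.mul_le_mul_right _ (by omega)
    omega
  have hsupp : i.support ⊆ {2, 3} := fun k hk => by
    have hik := mem_support_iff.1 hk
    have : k ≠ 0 := by rintro rfl; exact hik h0
    have : k ≠ 1 := by rintro rfl; exact hik h1
    have : k < 4 := Nat.lt_of_not_le fun h => hik (hbig k h)
    simp only [Finset.mem_insert, Finset.mem_singleton]; omega
  have hw23 : weightedSum (· - 1) i = i 2 + 2 * i 3 := by
    rw [weightedSum, Finset.sum_subset hsupp fun k _ hk => by simp [notMem_support_iff.1 hk],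
      Finset.sum_pair (by norm_num)]
    ring
  have hzero : ∀ k, k ≠ 2 → k ≠ 3 → i k = 0 := fun k h2 h3 =>
    notMem_support_iff.1 fun hk => by simpa [h2, h3] using hsupp hk
  rcases (by omega : i 2 = 2 ∧ i 3 = 0 ∨ i 2 = 0 ∧ i 3 = 1) with ⟨h2, h3⟩ | ⟨h2, h3⟩
  · left; ext k; by_cases hk2 : k = 2 <;> by_cases hk3 : k = 3 <;> simp_all
  · right; ext k; by_cases hk2 : k = 2 <;> by_cases hk3 : k = 3 <;> simp_all

def SatisfiesRecursion (P : (ℕ →₀ ℕ) → MvPolynomial ℕ ℤ) : Prop :=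
  ∀ i : ℕ →₀ ℕ, i 0 = 0 → i 1 = 0 → 2 ≤ weightedSum (· - 1) i - 1 →
    P i = (∑ j ∈ i.support.filter fun j => 3 ≤ j,
            C ((i (j - 1) : ℤ) + 1) * P (i + single (j - 1) 1 - single j 1))
      + (if 1 ≤ i 2 then
          (X (weightedSum (· - 1) i - 1) - C ((weightedSum id i : ℤ) - 2))
            * P (i - single 2 1)
        else 0)

def VanishesAtWeight (P : (ℕ →₀ ℕ) → MvPolynomial ℕ ℤ) (N : ℕ) : Prop :=
  ∀ i : ℕ →₀ ℕ, i 0 = 0 → i 1 = 0 → weightedSum (· - 1) i = N + 1 →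
    ∀ p : ℕ → ℕ, 1 ≤ p 1 → (∀ k, 1 ≤ k → k < N → p k < p (k + 1)) →
      p N ≤ weightedSum id i - 2 → eval (fun k => (p k : ℤ)) (P i) = 0

theorem vanishesAtWeight_one {P : (ℕ →₀ ℕ) → MvPolynomial ℕ ℤ}
    (hP2 : P (single 2 2) = (X 1 - C 2) * (X 1 - C 1)) (hP01 : P (single 3 1) = X 1 - C 1) :
    VanishesAtWeight P 1 := by
  intro i h0 h1 hw p hp1 _ hpS
  rcases eq_single_two_two_or_single_three_one h0 h1 hw with rfl | rfl
  · rcases (by simp only [weightedSum_single, id_eq] at hpS; omega : p 1 = 1 ∨ p 1 = 2) with h | h <;> simp [hP2, h]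
  · have : p 1 = 1 := by simp only [weightedSum_single, id_eq] at hpS; omega
    simp [hP01, this]

theorem VanishesAtWeight.succ {P : (ℕ →₀ ℕ) → MvPolynomial ℕ ℤ} (hrec : SatisfiesRecursion P)
    {N : ℕ} (hN : 1 ≤ N) (ih : VanishesAtWeight P N) : VanishesAtWeight P (N + 1) := by
  intro i h0 h1 hw p hp1 hmono hpS
  have hlt : p N < p (N + 1) := hmono N hN (by omega)
  have hmono' : ∀ k, 1 ≤ k → k < N → p k < p (k + 1) := fun k hk hkN => hmono k hk (by omega)
  have hshift : ∀ j ∈ i.support.filter (3 ≤ ·),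
      eval (fun k => (p k : ℤ)) (P (i + single (j - 1) 1 - single j 1)) = 0 := by
    intro j hj
    obtain ⟨hj, hj3⟩ := Finset.mem_filter.1 hj
    have hij : 1 ≤ i j := Nat.one_le_iff_ne_zero.2 (mem_support_iff.1 hj)
    have hw' := weightedSum_add_single_tsub_single_add (· - 1) (j - 1) hij
    have hS' := weightedSum_add_single_tsub_single_add id (j - 1) hij
    simp only [id] at hw' hS'
    exact ih _ (add_single_tsub_single_apply_eq_zero h0 (by omega))
      (add_single_tsub_single_apply_eq_zero h1 (by omega))
      (by omega) p hp1 hmono' (by omega)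
  have hremove : 1 ≤ i 2 → p (N + 1) < weightedSum id i - 2 →
      eval (fun k => (p k : ℤ)) (P (i - single 2 1)) = 0 := by
    intro hi2 hpN
    have hw' := weightedSum_tsub_single_add (· - 1) hi2
    have hS' := weightedSum_tsub_single_add id hi2
    simp only [id] at hw' hS'
    exact ih _ (by simp [h0]) (by simp [h1]) (by omega) p hp1 hmono' (by omega)
  rw [hrec i h0 h1 (by omega), map_add, map_sum,
    Finset.sum_eq_zero fun j hj => by rw [map_mul, hshift j hj, mul_zero], zero_add]
  split_ifs with hi2
  · rw [map_mul]
    rcases hpS.lt_or_eq with hpN | hpN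
    · rw [hremove hi2 hpN, mul_zero]
    · simp only [hw, eval_sub, eval_X, eval_C, Nat.add_sub_cancel, hpN, mul_eq_zero]
      left; omega
  · exact map_zero _

theorem poly_P_eval_eq_zero_general
    (P : (ℕ →₀ ℕ) → MvPolynomial ℕ ℤ)
    (hP2 : P (Finsupp.single 2 2) = (X 1 - C 2) * (X 1 - C 1))
    (hP01 : P (Finsupp.single 3 1) = X 1 - C 1)
    (hPrec : ∀ i : ℕ →₀ ℕ, i 0 = 0 → i 1 = 0 →
      2 ≤ (∑ k ∈ i.support, (k - 1) * i k) - 1 →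
      P i = (∑ j ∈ i.support.filter fun j => 3 ≤ j,
              C ((i (j - 1) : ℤ) + 1)
                * P (i + Finsupp.single (j - 1) 1 - Finsupp.single j 1))
        + (if 1 ≤ i 2 then
            (X ((∑ k ∈ i.support, (k - 1) * i k) - 1)
                - C (((∑ k ∈ i.support, k * i k : ℕ) : ℤ) - 2))
              * P (i - Finsupp.single 2 1)
          else 0)) :
    ∀ (i : ℕ →₀ ℕ) (N : ℕ), i 0 = 0 → i 1 = 0 →
      N = (∑ k ∈ i.support, (k - 1) * i k) - 1 → 2 ≤ N →
      ∀ p : ℕ → ℕ, 1 ≤ p 1 → (∀ k, 1 ≤ k → k < N → p k < p (k + 1)) →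
        p N ≤ (∑ k ∈ i.support, k * i k) - 2 →
        MvPolynomial.eval (fun k => (p k : ℤ)) (P i) = 0 := by
  have hvan : ∀ N, 1 ≤ N → VanishesAtWeight P N := fun N hN => by
    induction N, hN using Nat.le_induction with
    | base => exact vanishesAtWeight_one hP2 hP01
    | succ n hn ih => exact ih.succ hPrec hn
  intro i N h0 h1 hN hN2
  exact hvan N (by omega) i h0 h1 (show ∑ k ∈ i.support, (k - 1) * i k = N + 1 by omega)

/-- Let `P` be the polynomials indexed by dominant sequences `(i_2,…,i_n)` (encoded as
finitely supported functions `i : ℕ →₀ ℕ` vanishing at `0` and `1`, `i k` being the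
multiplicity `i_k`; trailing zeros are automatically absent, so the truncation `∂` is the
identity in this encoding), of weight `ω = Σ_{k ≥ 2} (k-1) i_k - 1`, defined by
`P_{(1)} = X_1`, `P_{(2)} = (X_1-2)(X_1-1)`, `P_{(0,1)} = X_1-1` and, for weight `≥ 2`,
`P_{i_2,…,i_n} = Σ_{j ≥ 3, i_j ≥ 1} (i_{j-1}+1) P_{∂(i_2,…,i_{j-1}+1,i_j-1,…,i_n)}
  + [i_2 ≥ 1](X_ω - 2i_2 - … - n i_n + 2) P_{∂(i_2-1,i_3,…,i_n)}`.
If `(i_2,…,i_n)` is a dominant sequence of weight `N ≥ 2` and `1 ≤ p_1 < … < p_N` are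
natural numbers with `p_N ≤ 2i_2 + 3i_3 + … + n·i_n - 2`, then
`P_{i_2,…,i_n}(p_1,…,p_N) = 0`. -/
theorem poly_P_eval_eq_zero
    (P : (ℕ →₀ ℕ) → MvPolynomial ℕ ℤ)
    (hP1 : P (Finsupp.single 2 1) = X 1)
    (hP2 : P (Finsupp.single 2 2) = (X 1 - C 2) * (X 1 - C 1))
    (hP01 : P (Finsupp.single 3 1) = X 1 - C 1)
    (hPrec : ∀ i : ℕ →₀ ℕ, i 0 = 0 → i 1 = 0 →
      2 ≤ (∑ k ∈ i.support, (k - 1) * i k) - 1 →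
      P i = (∑ j ∈ i.support.filter fun j => 3 ≤ j,
              C ((i (j - 1) : ℤ) + 1)
                * P (i + Finsupp.single (j - 1) 1 - Finsupp.single j 1))
        + (if 1 ≤ i 2 then
            (X ((∑ k ∈ i.support, (k - 1) * i k) - 1)
                - C (((∑ k ∈ i.support, k * i k : ℕ) : ℤ) - 2))
              * P (i - Finsupp.single 2 1)
          else 0)) :
    ∀ (i : ℕ →₀ ℕ) (N : ℕ), i 0 = 0 → i 1 = 0 →
      N = (∑ k ∈ i.support, (k - 1) * i k) - 1 → 2 ≤ N →
      ∀ p : ℕ → ℕ, 1 ≤ p 1 → (∀ k, 1 ≤ k → k < N → p k < p (k + 1)) →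
        p N ≤ (∑ k ∈ i.support, k * i k) - 2 →
        MvPolynomial.eval (fun k => (p k : ℤ)) (P i) = 0 :=
  poly_P_eval_eq_zero_general P hP2 hP01 hPrec
end

section
/- For n ≥ 5, Σ_{1 ≤ p_1 < p_2 ≤ n-1} (2p_1 + p_2 - 7)(p_1 - 1)/(p_1 p_2) = (n-1)(n-10) + (10-n) H^{(1)}_{n-1} + 7 H^{(2)}_{n-1}, where H^{(1)}_m = Σ_{1≤p≤m} 1/p and H^{(2)}_m = Σ_{1≤p<q≤m} 1/(pq). -/
/-!
Write `m = n - 1` and induct on `m`. Raising `m` to `m + 1` adds to each double sum over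
`1 ≤ p < q ≤ m` the column `q = m + 1`; for the left-hand side that column is computed by
splitting the summand as `(2p + (m - 8) - (m - 6)/p) / (m + 1)` and using `Σ p = m(m+1)/2`,
and it matches the increment of the right-hand side.
-/

open Finset

theorem sum_Icc_sum_Icc_succ_top {M : Type*} [AddCommMonoid M] (f : ℕ → ℕ → M) (a m : ℕ) :
    ∑ p ∈ Icc a (m + 1), ∑ q ∈ Icc (p + 1) (m + 1), f p q
      = ∑ p ∈ Icc a m, ∑ q ∈ Icc (p + 1) m, f p q + ∑ p ∈ Icc a m, f p (m + 1) := by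
  rcases le_or_gt a (m + 1) with ha | ha
  · have hlast : Icc (m + 1 + 1) (m + 1) = ∅ := Icc_eq_empty (by omega)
    rw [sum_Icc_succ_top ha, hlast, sum_empty, add_zero, ← sum_add_distrib]
    refine sum_congr rfl fun p hp => sum_Icc_succ_top ?_ _
    have := (mem_Icc.mp hp).2
    omega
  · simp [Icc_eq_empty_of_lt ha, Icc_eq_empty_of_lt (by omega : m < a)]

theorem sum_Icc_one_natCast (m : ℕ) : ∑ p ∈ Icc 1 m, (p : ℚ) = m * (m + 1) / 2 := by
  induction m with
  | zero => simp
  | succ k ih =>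
    rw [sum_Icc_succ_top (by omega), ih]
    push_cast
    ring

theorem sum_Icc_column (k : ℕ) :
    ∑ p ∈ Icc 1 k, (2 * (p : ℚ) + (k + 1) - 7) * (p - 1) / (p * (k + 1))
      = (k * (2 * k - 7) - (k - 6) * ∑ p ∈ Icc 1 k, (1 : ℚ) / p) / (k + 1) := by
  have hsplit : ∀ p ∈ Icc 1 k, (2 * (p : ℚ) + (k + 1) - 7) * (p - 1) / (p * (k + 1))
      = (2 * p + (k - 8) - (k - 6) * (1 / p)) / (k + 1) := by
    intro p hp
    have hp0 : (p : ℚ) ≠ 0 := by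
      have := (mem_Icc.mp hp).1
      positivity
    field_simp
    ring
  rw [sum_congr rfl hsplit, ← sum_div, sum_sub_distrib, sum_add_distrib, ← mul_sum, ← mul_sum,
    sum_Icc_one_natCast, sum_const, Nat.card_Icc, Nat.add_sub_cancel, nsmul_eq_mul]
  ring

theorem sum_Icc_sum_Icc_eq (m : ℕ) :
    ∑ p1 ∈ Icc 1 m, ∑ p2 ∈ Icc (p1 + 1) m,
        (2 * (p1 : ℚ) + (p2 : ℚ) - 7) * ((p1 : ℚ) - 1) / ((p1 : ℚ) * (p2 : ℚ))
      = m * (m - 9) + (9 - m) * (∑ p ∈ Icc 1 m, (1 : ℚ) / p)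
        + 7 * ∑ p ∈ Icc 1 m, ∑ q ∈ Icc (p + 1) m, (1 : ℚ) / (p * q) := by
  induction m with
  | zero => simp
  | succ k ih =>
    have hcolumn : ∑ p ∈ Icc 1 k, (1 : ℚ) / (p * (k + 1))
        = (∑ p ∈ Icc 1 k, (1 : ℚ) / p) / (k + 1) := by
      rw [sum_div]
      exact sum_congr rfl fun p _ => by rw [div_div]
    rw [sum_Icc_sum_Icc_succ_top, sum_Icc_sum_Icc_succ_top, sum_Icc_succ_top (by omega), ih]
    push_cast
    rw [sum_Icc_column, hcolumn]
    field_simp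
    ring

/-- For `n ≥ 5`,
`Σ_{1 ≤ p₁ < p₂ ≤ n-1} (2p₁+p₂-7)(p₁-1)/(p₁p₂)
  = (n-1)(n-10) + (10-n) H⁽¹⁾_{n-1} + 7 H⁽²⁾_{n-1}`,
where `H⁽¹⁾_m = Σ_{1 ≤ p ≤ m} 1/p` and `H⁽²⁾_m = Σ_{1 ≤ p < q ≤ m} 1/(pq)`. -/
theorem double_sum_eq (n : ℕ) (hn : 5 ≤ n) :
    ∑ p1 ∈ Finset.Icc 1 (n - 1), ∑ p2 ∈ Finset.Icc (p1 + 1) (n - 1),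
        (2 * (p1 : ℚ) + (p2 : ℚ) - 7) * ((p1 : ℚ) - 1) / ((p1 : ℚ) * (p2 : ℚ))
      = ((n : ℚ) - 1) * ((n : ℚ) - 10)
        + (10 - (n : ℚ)) * (∑ p ∈ Finset.Icc 1 (n - 1), (1 : ℚ) / (p : ℚ))
        + 7 * ∑ p ∈ Finset.Icc 1 (n - 1), ∑ q ∈ Finset.Icc (p + 1) (n - 1),
            (1 : ℚ) / ((p : ℚ) * (q : ℚ)) := by
  obtain ⟨m, rfl⟩ : ∃ m, n = m + 1 := ⟨n - 1, by omega⟩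
  rw [Nat.add_sub_cancel, sum_Icc_sum_Icc_eq]
  push_cast
  ring
end

section
/- For m ≥ 1 and r ≥ 1, Σ_{1≤p_1<...<p_r≤m} (p_1-1)/(p_1···p_r) = Σ_{1≤p_1<...<p_{r-1}≤m} (p_1-1)/(p_1···p_{r-1}) - H^{(r)}_m, where H^{(i)}_m = Σ_{1 ≤ q_1 < ... < q_i ≤ m} 1/(q_1···q_i), with the convention that for r = 1 the identity reads Σ_{1≤p≤m} (p-1)/p = m - H^{(1)}_m. -/
open Finset


/-- The iterated harmonic sum `H⁽ⁱ⁾_m = Σ_{1 ≤ q₁ < … < q_i ≤ m} 1/(q₁⋯q_i)`,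
the sum being over strictly increasing `i`-tuples (encoded as `i`-element subsets)
of positive integers bounded by `m`. -/
noncomputable def iterHarmonic (i m : ℕ) : ℚ :=
  ∑ s ∈ Finset.powersetCard i (Finset.Icc 1 m), (∏ q ∈ s, (q : ℚ))⁻¹

/-- `T_r(m) = Σ_{1 ≤ p₁ < … < p_r ≤ m} (p₁-1)/(p₁⋯p_r)`, the sum being over strictly
increasing `r`-tuples (encoded as `r`-element subsets, `p₁` being the least element). -/
noncomputable def Tsum (r m : ℕ) : ℚ :=
  ∑ s ∈ Finset.powersetCard r (Finset.Icc 1 m),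
    (((s.sort (· ≤ ·)).headI : ℚ) - 1) / ∏ q ∈ s, (q : ℚ)

noncomputable def fmin (s : Finset ℕ) : ℕ := (s.sort (· ≤ ·)).headI

lemma headI_eq_getElem (l : List ℕ) (h : 0 < l.length) : l.headI = l[0] := by
  cases l with
  | nil => simp at h
  | cons a t => simp

lemma fmin_eq_min' (s : Finset ℕ) (hs : s.Nonempty) : fmin s = s.min' hs := by
  have h : 0 < (s.sort (· ≤ ·)).length := by
    rw [Finset.length_sort]; exact Finset.card_pos.2 hs
  rw [fmin, headI_eq_getElem _ h, Finset.sorted_zero_eq_min']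

lemma fmin_mem (s : Finset ℕ) (hs : s.Nonempty) : fmin s ∈ s := by
  rw [fmin_eq_min' s hs]; exact s.min'_mem hs

lemma fmin_le (s : Finset ℕ) (hs : s.Nonempty) {x : ℕ} (hx : x ∈ s) : fmin s ≤ x := by
  rw [fmin_eq_min' s hs]; exact s.min'_le x hx

lemma fmin_insert (t : Finset ℕ) (p : ℕ) (hp : ∀ x ∈ t, p ≤ x) :
    fmin (insert p t) = p := by
  have hne : (insert p t).Nonempty := insert_nonempty _ _
  refine le_antisymm (fmin_le _ hne (mem_insert_self _ _)) ?_
  rcases mem_insert.1 (fmin_mem _ hne) with h | h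
  · exact h.ge
  · exact hp _ h

lemma prod_ne_zero_of_subset {m : ℕ} {s : Finset ℕ} (hs : s ⊆ Finset.Icc 1 m) :
    (∏ q ∈ s, (q : ℚ)) ≠ 0 := by
  refine Finset.prod_ne_zero_iff.2 fun q hq => ?_
  have : 1 ≤ q := (Finset.mem_Icc.1 (hs hq)).1
  exact_mod_cast Nat.one_le_iff_ne_zero.1 this

/-- The key reindexing step. -/
lemma key (m r : ℕ) (hr : 1 ≤ r) :
    ∑ s ∈ Finset.powersetCard (r + 1) (Finset.Icc 1 m),
      (∏ q ∈ s.erase (fmin s), (q : ℚ))⁻¹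
    = ∑ t ∈ Finset.powersetCard r (Finset.Icc 1 m),
      ((fmin t : ℚ) - 1) * (∏ q ∈ t, (q : ℚ))⁻¹ := by
  have hR : ∀ t ∈ Finset.powersetCard r (Finset.Icc 1 m),
      ((fmin t : ℚ) - 1) * (∏ q ∈ t, (q : ℚ))⁻¹
      = ∑ _p ∈ Finset.Ico 1 (fmin t), (∏ q ∈ t, (q : ℚ))⁻¹ := by
    intro t ht
    obtain ⟨hsub, hcard⟩ := Finset.mem_powersetCard.1 ht
    have hne : t.Nonempty := Finset.card_pos.1 (hcard ▸ hr)
    have h1 : 1 ≤ fmin t := (Finset.mem_Icc.1 (hsub (fmin_mem t hne))).1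
    rw [Finset.sum_const, Nat.card_Ico, nsmul_eq_mul]
    congr 1
    push_cast [Nat.cast_sub h1]
    ring
  rw [Finset.sum_congr rfl hR, Finset.sum_sigma']
  refine Finset.sum_nbij' (fun s => (⟨s.erase (fmin s), fmin s⟩ : (_ : Finset ℕ) × ℕ))
      (fun a => insert a.2 a.1) ?_ ?_ ?_ ?_ ?_
  · intro s hs
    obtain ⟨hsub, hcard⟩ := Finset.mem_powersetCard.1 hs
    have hne : s.Nonempty := Finset.card_pos.1 (by omega)
    have hmem := fmin_mem s hne
    have hce : (s.erase (fmin s)).card = r := by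
      rw [Finset.card_erase_of_mem hmem, hcard]
      omega
    have hene : (s.erase (fmin s)).Nonempty := Finset.card_pos.1 (by omega)
    refine Finset.mem_sigma.2 ⟨Finset.mem_powersetCard.2
      ⟨(Finset.erase_subset _ _).trans hsub, hce⟩, Finset.mem_Ico.2 ⟨?_, ?_⟩⟩
    · exact (Finset.mem_Icc.1 (hsub hmem)).1
    · have h1 := fmin_mem _ hene
      have h2 : fmin (s.erase (fmin s)) ∈ s := Finset.mem_of_mem_erase h1
      have h3 : fmin (s.erase (fmin s)) ≠ fmin s := Finset.ne_of_mem_erase h1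
      exact lt_of_le_of_ne (fmin_le s hne h2) (Ne.symm h3)
  · rintro ⟨t, p⟩ ha
    obtain ⟨ht, hp⟩ := Finset.mem_sigma.1 ha
    obtain ⟨hsub, hcard⟩ := Finset.mem_powersetCard.1 ht
    have hne : t.Nonempty := Finset.card_pos.1 (hcard ▸ hr)
    obtain ⟨hp1, hplt⟩ := Finset.mem_Ico.1 hp
    have hpt : p ∉ t := fun h => absurd (fmin_le t hne h) (not_le.2 hplt)
    refine Finset.mem_powersetCard.2 ⟨?_, ?_⟩
    · refine Finset.insert_subset ?_ hsub
      have : fmin t ≤ m := (Finset.mem_Icc.1 (hsub (fmin_mem t hne))).2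
      exact Finset.mem_Icc.2 ⟨hp1, le_trans hplt.le this⟩
    · rw [Finset.card_insert_of_notMem hpt, hcard]
  · intro s hs
    obtain ⟨hsub, hcard⟩ := Finset.mem_powersetCard.1 hs
    have hne : s.Nonempty := Finset.card_pos.1 (by omega)
    exact Finset.insert_erase (fmin_mem s hne)
  · rintro ⟨t, p⟩ ha
    obtain ⟨ht, hp⟩ := Finset.mem_sigma.1 ha
    obtain ⟨hsub, hcard⟩ := Finset.mem_powersetCard.1 ht
    have hne : t.Nonempty := Finset.card_pos.1 (hcard ▸ hr)
    obtain ⟨hp1, hplt⟩ := Finset.mem_Ico.1 hp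
    have hpt : p ∉ t := fun h => absurd (fmin_le t hne h) (not_le.2 hplt)
    have hf : fmin (insert p t) = p :=
      fmin_insert t p fun x hx => le_trans hplt.le (fmin_le t hne hx)
    simp only [hf, Finset.erase_insert hpt]
  · exact fun s _ => rfl


/-- For `m ≥ 1` and `r ≥ 1`, the sums `T_r(m) = Σ_{1 ≤ p₁ < … < p_r ≤ m} (p₁-1)/(p₁⋯p_r)`
satisfy the recursion-free identity `T_r(m) = T_{r-1}(m) - H⁽ʳ⁾_m` for `r ≥ 2`, with the
convention that for `r = 1` the sum is `T_1(m) = Σ_{1 ≤ p ≤ m} (p-1)/p = m - H⁽¹⁾_m`. -/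
theorem Tsum_recursion (m : ℕ) (hm : 1 ≤ m) :
    Tsum 1 m = (m : ℚ) - iterHarmonic 1 m ∧
    ∀ r : ℕ, 2 ≤ r → Tsum r m = Tsum (r - 1) m - iterHarmonic r m := by
  constructor
  · rw [Tsum, iterHarmonic, Finset.powersetCard_one, Finset.sum_map, Finset.sum_map]
    simp only [Function.Embedding.coeFn_mk, Finset.sort_singleton, List.headI,
      Finset.prod_singleton]
    have h1 : ∀ p ∈ Finset.Icc 1 m, ((p : ℚ) - 1) / p = 1 - (p : ℚ)⁻¹ := by
      intro p hp
      have : (p : ℚ) ≠ 0 := by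
        have := (Finset.mem_Icc.1 hp).1
        exact_mod_cast Nat.one_le_iff_ne_zero.1 this
      field_simp
    rw [Finset.sum_congr rfl h1, Finset.sum_sub_distrib, Finset.sum_const,
      Nat.card_Icc, nsmul_eq_mul]
    push_cast
    ring_nf
  · intro r hr
    obtain ⟨k, rfl⟩ : ∃ k, r = k + 2 := ⟨r - 2, by omega⟩
    have hstep : ∀ s ∈ Finset.powersetCard (k + 2) (Finset.Icc 1 m),
        ((fmin s : ℚ) - 1) / ∏ q ∈ s, (q : ℚ)
        = (∏ q ∈ s.erase (fmin s), (q : ℚ))⁻¹ - (∏ q ∈ s, (q : ℚ))⁻¹ := by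
      intro s hs
      obtain ⟨hsub, hcard⟩ := Finset.mem_powersetCard.1 hs
      have hne : s.Nonempty := Finset.card_pos.1 (by omega)
      have hmem := fmin_mem s hne
      have hprod : (fmin s : ℚ) * ∏ q ∈ s.erase (fmin s), (q : ℚ)
          = ∏ q ∈ s, (q : ℚ) := Finset.mul_prod_erase s _ hmem
      have ha : (fmin s : ℚ) ≠ 0 := by
        have := (Finset.mem_Icc.1 (hsub hmem)).1
        exact_mod_cast Nat.one_le_iff_ne_zero.1 this
      have hP : (∏ q ∈ s.erase (fmin s), (q : ℚ)) ≠ 0 :=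
        prod_ne_zero_of_subset ((Finset.erase_subset _ _).trans hsub)
      rw [← hprod]
      field_simp
    have hT : Tsum (k + 2) m = ∑ s ∈ Finset.powersetCard (k + 2) (Finset.Icc 1 m),
        ((fmin s : ℚ) - 1) / ∏ q ∈ s, (q : ℚ) := rfl
    rw [hT, Finset.sum_congr rfl hstep, Finset.sum_sub_distrib,
      key m (k + 1) (by omega)]
    have hk : k + 2 - 1 = k + 1 := rfl
    rw [hk]
    have h2 : Tsum (k + 1) m = ∑ t ∈ Finset.powersetCard (k + 1) (Finset.Icc 1 m),
        ((fmin t : ℚ) - 1) * (∏ q ∈ t, (q : ℚ))⁻¹ := by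
      rw [Tsum]
      exact Finset.sum_congr rfl fun t ht => div_eq_mul_inv _ _
    rw [h2]
    rfl
end
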